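/- arXiv:1509.08251 — 6 statements merged into one kernel-verified Lean document; each statement's English description precedes it below -/
import Mathlib

section
/- Let G=(V,E) be a finite simple undirected graph and let π be a partition of V. Suppose π' is obtained from π by a refining operation (R,S) for some π-closed sets R,S ⊆ V. Then for every stable partition ρ of V with π ⪯ ρ, it holds that π ⪯ π' ⪯ ρ. -/
/-- The number of neighbours of `u` in the cell of `w` of the partition `π`. -/
noncomputable def cellDeg {V : Type*} (G : SimpleGraph V) (π : Setoid V) (u w : V) : ℕ :=
  (G.neighborSet u ∩ {x | π.r x w}).ncard

/-- The partition (given as a setoid) `π` is stable for the graph `G`: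
any two vertices in a common cell have the same number of neighbours in every cell. -/
def IsStable {V : Type*} (G : SimpleGraph V) (π : Setoid V) : Prop :=
  ∀ u v, π.r u v → ∀ w, cellDeg G π u w = cellDeg G π v w

/-- `S` is `π`-closed, i.e. a union of cells of `π`. -/
def Closed {V : Type*} (π : Setoid V) (S : Set V) : Prop :=
  ∀ u v, π.r u v → (u ∈ S ↔ v ∈ S)

/-- `ρ` refines `π`; this is the paper's `π ⪯ ρ`. -/
def Finer {V : Type*} (ρ π : Setoid V) : Prop :=
  ∀ u v, ρ.r u v → π.r u v

/-- `C` is a cell of the partition `π`. -/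
def IsCell {V : Type*} (π : Setoid V) (C : Set V) : Prop :=
  ∃ w, C = {x | π.r x w}

/-- `π'` is obtained from `π` by the refining operation `(R, S)` (for `π`-closed `R`, `S`):
cells disjoint from `S` are unchanged, and two vertices of `S` stay in a common cell iff
they were `π`-equivalent and have the same number of neighbours in every cell of `π`
contained in `R` (such cells are exactly the cells of the elements of `R`). -/
def IsRefineOp {V : Type*} (G : SimpleGraph V) (π : Setoid V) (R S : Set V)
    (π' : Setoid V) : Prop :=
  Closed π R ∧ Closed π S ∧
    ∀ u v, π'.r u v ↔
      (π.r u v ∧ (u ∈ S → ∀ w ∈ R, cellDeg G π u w = cellDeg G π v w))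

/-! A `ρ`-closed set is a disjoint union of `ρ`-cells, so stability of `ρ` gives `ρ`-equivalent
vertices equally many neighbours in every `ρ`-closed set. Since `π ⪯ ρ`, every cell of `π` is
`ρ`-closed, so the refining operation never separates two `ρ`-equivalent vertices. -/

section

variable {V : Type*}

lemma Closed.cell_subset {ρ : Setoid V} {T : Set V} (hT : Closed ρ T) {w : V} (hw : w ∈ T) :
    {x | ρ.r x w} ⊆ T :=
  fun _ hx => (hT _ _ hx).mpr hw

lemma Closed.disjoint_cell {ρ : Setoid V} {T : Set V} (hT : Closed ρ T) {w : V} (hw : w ∉ T) :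
    Disjoint T {x | ρ.r x w} :=
  Set.disjoint_right.mpr fun _ hx hxT => hw ((hT _ _ hx).mp hxT)

lemma Finer.closed_cell {ρ π : Setoid V} (h : Finer ρ π) (w : V) : Closed ρ {x | π.r x w} :=
  fun _ _ hab => ⟨π.trans (π.symm (h _ _ hab)), π.trans (h _ _ hab)⟩

lemma IsStable.ncard_neighborSet_inter_eq [Finite V] {G : SimpleGraph V} {ρ : Setoid V}
    (hρ : IsStable G ρ) {T : Set V} (hT : Closed ρ T) {u v : V} (huv : ρ.r u v) :
    (G.neighborSet u ∩ T).ncard = (G.neighborSet v ∩ T).ncard := by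
  rw [ρ.isPartition_classes.ncard_eq_finsum, ρ.isPartition_classes.ncard_eq_finsum]
  refine finsum_congr fun ⟨_, w, hcell⟩ => ?_
  simp only [hcell, Set.inter_assoc]
  by_cases hw : w ∈ T
  · simp only [Set.inter_eq_right.mpr (hT.cell_subset hw)]
    exact hρ u v huv w
  · simp only [(hT.disjoint_cell hw).inter_eq, Set.inter_empty]

end

/-- If `π'` is obtained from `π` by a refining operation `(R,S)`
(for `π`-closed sets `R,S`), then for every stable partition `ρ` with `π ⪯ ρ` we have
`π ⪯ π' ⪯ ρ`. -/
theorem refineOp_safe {V : Type*} [Finite V] (G : SimpleGraph V)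
    (π π' : Setoid V) (R S : Set V) (hop : IsRefineOp G π R S π')
    (ρ : Setoid V) (hρstable : IsStable G ρ) (hρπ : Finer ρ π) :
    Finer π' π ∧ Finer ρ π' := by
  obtain ⟨-, -, hπ'⟩ := hop
  refine ⟨fun u v h => ((hπ' u v).mp h).1, fun u v h => (hπ' u v).mpr ⟨hρπ u v h, ?_⟩⟩
  exact fun _ w _ => hρstable.ncard_neighborSet_inter_eq (hρπ.closed_cell w) h
end

section
/- Let G=(V,E) be a finite simple undirected graph and let π be a stable partition of V. For every π-closed set S ⊆ V and all vertices u,v ∈ V: if the graph distance from u to S differs from the graph distance from v to S, then u and v lie in different cells of π. -/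
/-!
Write `d x` for the distance from `x` to `S`. By induction on `n`, `u ≈ v` and `d v ≤ n` give
`d u ≤ n`: if `v ∈ S` then `u ∈ S` because `S` is closed; otherwise `v` has a neighbour `w` with
`d w ≤ n - 1`, and stability gives `u` a neighbour `w'` in the cell of `w`, to which the induction
hypothesis applies. By symmetry `d u = d v`.
-/

namespace SimpleGraph

variable {V : Type*} (G : SimpleGraph V)

/-- Equals `⊤` when no vertex of `S` is reachable from `x`, in particular when `S = ∅`. -/
noncomputable def infEdist (x : V) (S : Set V) : ℕ∞ :=
  ⨅ s ∈ S, G.edist x s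

variable {G} {S : Set V} {x y : V}

lemma infEdist_le_edist (hs : y ∈ S) : G.infEdist x S ≤ G.edist x y :=
  biInf_le _ hs

lemma infEdist_eq_zero_of_mem (hx : x ∈ S) : G.infEdist x S = 0 :=
  nonpos_iff_eq_zero.mp <| (infEdist_le_edist hx).trans_eq edist_self

@[simp]
lemma infEdist_empty : G.infEdist x ∅ = ⊤ := by
  simp [infEdist]

lemma exists_mem_edist_eq_infEdist (hS : S.Nonempty) :
    ∃ s ∈ S, G.edist x s = G.infEdist x S := by
  have : Nonempty S := hS.to_subtype
  obtain ⟨⟨s, hs⟩, h⟩ := ENat.exists_eq_iInf fun s : S ↦ G.edist x s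
  exact ⟨s, hs, h.trans (iInf_subtype' (f := fun s _ ↦ G.edist x s)).symm⟩

lemma exists_mem_edist_le_of_infEdist_le {n : ℕ} (h : G.infEdist x S ≤ n) :
    ∃ s ∈ S, G.edist x s ≤ n := by
  obtain rfl | hS := S.eq_empty_or_nonempty
  · simp at h
  obtain ⟨s, hs, hxs⟩ := exists_mem_edist_eq_infEdist (x := x) hS
  exact ⟨s, hs, hxs.trans_le h⟩

lemma mem_of_infEdist_eq_zero (h : G.infEdist x S = 0) : x ∈ S := by
  obtain ⟨s, hs, hxs⟩ := exists_mem_edist_le_of_infEdist_le (n := 0) (h.trans_le le_rfl)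
  rwa [edist_eq_zero_iff.mp (nonpos_iff_eq_zero.mp hxs)]

lemma infEdist_le_edist_add_infEdist : G.infEdist x S ≤ G.edist x y + G.infEdist y S := by
  obtain rfl | hS := S.eq_empty_or_nonempty
  · simp
  obtain ⟨s, hs, hys⟩ := exists_mem_edist_eq_infEdist (x := y) hS
  calc G.infEdist x S ≤ G.edist x s := infEdist_le_edist hs
    _ ≤ G.edist x y + G.edist y s := SimpleGraph.edist_triangle
    _ = G.edist x y + G.infEdist y S := by rw [hys]

lemma exists_adj_infEdist_le_of_notMem {n : ℕ} (hx : x ∉ S) (h : G.infEdist x S ≤ n + 1) :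
    ∃ y, G.Adj x y ∧ G.infEdist y S ≤ n := by
  obtain ⟨s, hs, hxs⟩ := exists_mem_edist_le_of_infEdist_le h
  obtain ⟨p, hp⟩ := exists_walk_of_edist_ne_top (ne_top_of_le_ne_top (by simp) hxs)
  cases p with
  | nil => exact absurd hs hx
  | cons hadj q =>
    refine ⟨_, hadj, (infEdist_le_edist hs).trans <| (edist_le q).trans ?_⟩
    rw [← hp, Walk.length_cons] at hxs
    exact_mod_cast (Nat.add_le_add_iff_right.mp (by exact_mod_cast hxs) : q.length ≤ n)

end SimpleGraph

open SimpleGraph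

section Stable

variable {V : Type*} [Finite V] {G : SimpleGraph V} {π : Setoid V}

lemma IsStable.exists_adj_rel (hst : IsStable G π) {u v w : V} (huv : π.r u v)
    (hvw : G.Adj v w) : ∃ w', G.Adj u w' ∧ π.r w' w := by
  have hpos : 0 < cellDeg G π v w := (Set.ncard_pos (Set.toFinite _)).mpr ⟨w, hvw, π.refl w⟩
  rw [← hst u v huv w] at hpos
  exact (Set.ncard_pos (Set.toFinite _)).mp hpos

lemma IsStable.infEdist_le_of_rel_of_infEdist_le (hst : IsStable G π) {S : Set V}
    (hS : Closed π S) (n : ℕ) :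
    ∀ {u v : V}, π.r u v → G.infEdist v S ≤ n → G.infEdist u S ≤ n := by
  induction n with
  | zero =>
    intro u v huv hv
    have hvS : v ∈ S := mem_of_infEdist_eq_zero (by exact_mod_cast nonpos_iff_eq_zero.mp hv)
    rw [infEdist_eq_zero_of_mem ((hS u v huv).mpr hvS)]
    exact zero_le
  | succ n ih =>
    intro u v huv hv
    by_cases hvS : v ∈ S
    · rw [infEdist_eq_zero_of_mem ((hS u v huv).mpr hvS)]
      exact zero_le
    obtain ⟨w, hvw, hw⟩ := exists_adj_infEdist_le_of_notMem hvS hv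
    obtain ⟨w', huw', hw'w⟩ := hst.exists_adj_rel huv hvw
    calc G.infEdist u S ≤ G.edist u w' + G.infEdist w' S := infEdist_le_edist_add_infEdist
      _ ≤ 1 + n := add_le_add (edist_eq_one_iff_adj.mpr huw').le (ih hw'w hw)
      _ = (n + 1 : ℕ) := by push_cast; ring

lemma IsStable.infEdist_le_of_rel (hst : IsStable G π) {S : Set V} (hS : Closed π S)
    {u v : V} (huv : π.r u v) : G.infEdist u S ≤ G.infEdist v S := by
  cases hv : G.infEdist v S using ENat.recTopCoe with
  | top => exact le_top
  | coe n => exact hst.infEdist_le_of_rel_of_infEdist_le hS n huv hv.le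

end Stable

/-- If `π` is stable for `G` and `S` is `π`-closed, then any two vertices
at different (possibly infinite) distances from `S` lie in different cells of `π`. -/
theorem distance_separates {V : Type*} [Finite V] (G : SimpleGraph V) (π : Setoid V)
    (hst : IsStable G π) (S : Set V) (hS : Closed π S) (u v : V)
    (hdist : (⨅ s ∈ S, G.edist u s) ≠ ⨅ s ∈ S, G.edist v s) :
    ¬ π.r u v := fun huv ↦
  hdist <| le_antisymm (hst.infEdist_le_of_rel hS huv) (hst.infEdist_le_of_rel hS (π.symm huv))
end

section
/- Let G=(V,E) be a finite simple undirected graph, let π be a partition of V, and let π_∞ denote the coarsest stable partition of V refining π. If ρ is a partition with π ⪯ ρ ⪯ π_∞, then cost(π) ≥ cost(ρ). -/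
/-- The cost of the refining operation `(R,S)`: the number of pairs `(u,v)` with
`uv ∈ E(G)`, `u ∈ R`, `v ∈ S`. -/
noncomputable def opCost {V : Type*} (G : SimpleGraph V) (R S : Set V) : ℕ :=
  {p : V × V | G.Adj p.1 p.2 ∧ p.1 ∈ R ∧ p.2 ∈ S}.ncard

/-- `CostReach G π c` holds iff some sequence of effective refining operations starting
from `π` and ending in a stable partition has total cost `c`. -/
inductive CostReach {V : Type*} (G : SimpleGraph V) : Setoid V → ℕ → Prop
  | stable {π : Setoid V} (h : IsStable G π) : CostReach G π 0
  | step {π π' : Setoid V} {R S : Set V} {c : ℕ} (hop : IsRefineOp G π R S π')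
      (heff : π' ≠ π) (htail : CostReach G π' c) :
      CostReach G π (opCost G R S + c)

/-- The cost of a partition: the minimum total cost of a sequence of effective refining
operations transforming it into a stable partition. -/
noncomputable def cost {V : Type*} (G : SimpleGraph V) (π : Setoid V) : ℕ :=
  sInf {c : ℕ | CostReach G π c}

/-! Run a sequence of refining operations that takes `π` to a stable partition on `ρ` in
parallel, applying the same `(R, S)` to both. Since a `π`-closed set is a union of `ρ`-cells,
neighbour counts in `ρ`-cells determine those in `π`-cells, so the invariant `π ⪯ ρ ⪯ π_∞`
survives each step, and each step costs the same on both sides. Steps that are not effective on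
`ρ` are skipped. When `π` has become stable it is refined by `π_∞`, so `ρ` coincides with it. -/

section

open Finset
variable {V : Type*} {G : SimpleGraph V}

theorem ncard_neighborSet_inter_eq_of_closed [Finite V] {ρ : Setoid V} {s : Set V}
    (hs : Closed ρ s) {u v : V} (h : ∀ x ∈ s, cellDeg G ρ u x = cellDeg G ρ v x) :
    (G.neighborSet u ∩ s).ncard = (G.neighborSet v ∩ s).ncard := by
  classical
  cases nonempty_fintype V
  have fiber (a x : V) : #{y ∈ (G.neighborSet a ∩ s).toFinset | ⟦y⟧ = (⟦x⟧ : Quotient ρ)} =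
      if x ∈ s then cellDeg G ρ a x else 0 := by
    split_ifs with hx
    · rw [cellDeg, Set.ncard_eq_toFinset_card']
      congr 1
      ext y
      simp only [Finset.mem_filter, Set.mem_toFinset, Set.mem_inter_iff, Set.mem_ofPred_eq,
        Quotient.eq]
      exact ⟨fun h => ⟨h.1.1, h.2⟩, fun h => ⟨⟨h.1, (hs y x h.2).2 hx⟩, h.2⟩⟩
    · rw [Finset.card_eq_zero, Finset.filter_eq_empty_iff]
      rintro y hy hyx
      rw [Set.mem_toFinset] at hy
      exact hx ((hs y x (Quotient.exact hyx)).1 hy.2)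
  have sum_fibers (a : V) : (G.neighborSet a ∩ s).ncard =
      ∑ q : Quotient ρ, #{y ∈ (G.neighborSet a ∩ s).toFinset | ⟦y⟧ = q} := by
    rw [Set.ncard_eq_toFinset_card', Finset.card_eq_sum_card_fiberwise (f := Quotient.mk ρ)
      (t := Finset.univ) (by simp)]
  rw [sum_fibers, sum_fibers]
  refine Finset.sum_congr rfl fun q _ => ?_
  induction q using Quotient.inductionOn with | h x => ?_
  rw [fiber, fiber]
  split_ifs with hx
  exacts [h x hx, rfl]

theorem Closed.of_finer {ρ π : Setoid V} {S : Set V} (hS : Closed π S) (hρπ : Finer ρ π) :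
    Closed ρ S :=
  fun u v huv => hS u v (hρπ u v huv)

theorem cellDeg_eq_of_finer [Finite V] {ρ π : Setoid V} (hρπ : Finer ρ π) {u v w : V}
    (h : ∀ x, π.r x w → cellDeg G ρ u x = cellDeg G ρ v x) :
    cellDeg G π u w = cellDeg G π v w :=
  ncard_neighborSet_inter_eq_of_closed
    (fun _ _ hxy => ⟨fun hx => π.trans' (π.symm' (hρπ _ _ hxy)) hx,
      fun hy => π.trans' (hρπ _ _ hxy) hy⟩) h

variable (G) in
/-- The paper's `π(R,S)`. -/
def refineOp (π : Setoid V) (R S : Set V) (hS : Closed π S) : Setoid V where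
  r u v := π.r u v ∧ (u ∈ S → ∀ w ∈ R, cellDeg G π u w = cellDeg G π v w)
  iseqv :=
    { refl := fun u => ⟨π.refl' u, fun _ _ _ => rfl⟩
      symm := fun {u v} h => ⟨π.symm' h.1, fun hv w hw => (h.2 ((hS u v h.1).2 hv) w hw).symm⟩
      trans := fun {u v _} h₁ h₂ => ⟨π.trans' h₁.1 h₂.1,
        fun hu w hw => (h₁.2 hu w hw).trans (h₂.2 ((hS u v h₁.1).1 hu) w hw)⟩ }

variable (G) in
theorem isRefineOp_refineOp {π : Setoid V} {R S : Set V} (hR : Closed π R)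
    (hS : Closed π S) :
    IsRefineOp G π R S (refineOp G π R S hS) :=
  ⟨hR, hS, fun _ _ => Iff.rfl⟩

theorem IsRefineOp.finer {π π' : Setoid V} {R S : Set V} (hop : IsRefineOp G π R S π') :
    Finer π' π :=
  fun u v huv => ((hop.2.2 u v).1 huv).1

theorem IsRefineOp.finer_of_finer [Finite V] {π π' ρ : Setoid V} {R S : Set V}
    (hop : IsRefineOp G π R S π') (hρπ : Finer ρ π) :
    Finer (refineOp G ρ R S (hop.2.1.of_finer hρπ)) π' :=
  fun u v huv => (hop.2.2 u v).2 ⟨hρπ u v huv.1, fun hu w hw =>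
    cellDeg_eq_of_finer hρπ fun x hxw => huv.2 hu x ((hop.1 x w hxw).2 hw)⟩

theorem IsStable.finer_refineOp [Finite V] {ω ρ : Setoid V} (hω : IsStable G ω)
    (hωρ : Finer ω ρ) (R S : Set V) (hS : Closed ρ S) : Finer ω (refineOp G ρ R S hS) :=
  fun u v huv => ⟨hωρ u v huv, fun _ _ _ =>
    cellDeg_eq_of_finer hωρ fun x _ => hω u v huv x⟩

theorem isStable_of_refineOp_univ_eq {π : Setoid V} (h : refineOp G π .univ .univ
    (fun _ _ _ => Iff.rfl) = π) : IsStable G π := by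
  intro u v huv w
  rw [← h] at huv
  exact huv.2 trivial w trivial

instance [Finite V] : Finite (Setoid V) :=
  Finite.of_injective (fun σ : Setoid V => (σ.r : V → V → Prop)) fun _ _ h =>
    Setoid.ext fun u v => Iff.of_eq (congrFun (congrFun h u) v)

variable (G) in
theorem CostReach.exists [Finite V] (π : Setoid V) : ∃ c, CostReach G π c := by
  induction π using WellFoundedLT.induction with
  | _ π ih =>
    by_cases hπ : IsStable G π
    · exact ⟨0, .stable hπ⟩
    · have hS : Closed π .univ := fun _ _ _ => Iff.rfl
      have hop := isRefineOp_refineOp G hS hS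
      have hne : refineOp G π .univ .univ hS ≠ π := mt isStable_of_refineOp_univ_eq hπ
      obtain ⟨c, hc⟩ := ih _ (lt_of_le_of_ne (Setoid.le_def.2 fun h => hop.finer _ _ h) hne)
      exact ⟨_, .step hop hne hc⟩

variable (G) in
theorem costReach_cost [Finite V] (π : Setoid V) : CostReach G π (cost G π) :=
  Nat.sInf_mem (CostReach.exists G π)

theorem CostReach.exists_le_of_finer [Finite V] {π ω : Setoid V} {c : ℕ} (hc : CostReach G π c)
    (hω : IsStable G ω) (hcoarsest : ∀ σ, IsStable G σ → Finer σ π → Finer σ ω)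
    {ρ : Setoid V} (hρπ : Finer ρ π) (hωρ : Finer ω ρ) : ∃ c' ≤ c, CostReach G ρ c' := by
  induction hc generalizing ρ with
  | @stable π hπ =>
    have hρ : ρ = π := Setoid.ext fun u v =>
      ⟨hρπ u v, fun huv => hωρ u v (hcoarsest π hπ (fun _ _ => id) u v huv)⟩
    exact ⟨0, le_rfl, hρ ▸ .stable hπ⟩
  | @step π π' R S c hop _ _ ih =>
    set ρ' := refineOp G ρ R S (hop.2.1.of_finer hρπ)
    obtain ⟨c', hc', hρ'⟩ := ih
      (fun σ hσ hσπ' => hcoarsest σ hσ fun u v huv => hop.finer u v (hσπ' u v huv))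
      (hop.finer_of_finer hρπ) (hω.finer_refineOp hωρ R S _)
    by_cases hne : ρ' = ρ
    · exact ⟨c', hc'.trans (Nat.le_add_left c _), hne ▸ hρ'⟩
    · exact ⟨_, Nat.add_le_add_left hc' _,
        .step (isRefineOp_refineOp G (hop.1.of_finer hρπ) _) hne hρ'⟩

end

theorem cost_mono_general {V : Type*} [Finite V] (G : SimpleGraph V) (π ρ ω : Setoid V)
    (hωstable : IsStable G ω)
    (hcoarsest : ∀ σ : Setoid V, IsStable G σ → Finer σ π → Finer σ ω)
    (hρπ : Finer ρ π) (hωρ : Finer ω ρ) :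
    cost G ρ ≤ cost G π := by
  obtain ⟨c, hc, hρ⟩ := (costReach_cost G π).exists_le_of_finer hωstable hcoarsest hρπ hωρ
  exact (Nat.sInf_le hρ).trans hc

/-- If `ω = π_∞` is the coarsest stable partition refining `π` and
`ρ` satisfies `π ⪯ ρ ⪯ π_∞`, then `cost π ≥ cost ρ`. -/
theorem cost_mono {V : Type*} [Finite V] (G : SimpleGraph V) (π ρ ω : Setoid V)
    (hωstable : IsStable G ω) (hωπ : Finer ω π)
    (hcoarsest : ∀ σ : Setoid V, IsStable G σ → Finer σ π → Finer σ ω)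
    (hρπ : Finer ρ π) (hωρ : Finer ω ρ) :
    cost G ρ ≤ cost G π :=
  cost_mono_general G π ρ ω hωstable hcoarsest hρπ hωρ
end

section
/- Let ℓ ≥ 1 and let G be the AND_ℓ-gadget with in-terminals B = {b₀,…,b_{2^ℓ−1}} and out-terminals a₀, a₁. Let ψ be a partition of B into binary blocks, and let ρ be the coarsest stable partition of V(G) that refines ψ (i.e. refines ψ ∪ {V(G)∖B}). Then ρ agrees with ψ on B (the partition induced by ρ on B equals ψ); furthermore, ρ distinguishes a₀ from a₁ (puts them in different cells) if and only if ψ distinguishes all in-terminal pairs, i.e. b_{2p} and b_{2p+1} lie in different cells of ψ for every 0 ≤ p < 2^{ℓ−1}. -/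
/-- The vertex type of the gadget `AND_ℓ`.  For `ℓ ∈ {0,1}` it is `Fin 4`
(`a₀ = 0`, `a₁ = 1`, `b₀ = 2`, `b₁ = 3`), for `ℓ = 2` it is `Fin 10`
(`a₀ = 0`, `a₁ = 1`, `b₀,…,b₃ = 2,…,5`, `c₀,…,c₃ = 6,…,9`) and for `ℓ ≥ 3` it is
the disjoint union of a copy of `AND₂` and two copies of `AND_{ℓ-1}`. -/
def ANDVert : ℕ → Type
  | 0 => Fin 4
  | 1 => Fin 4
  | 2 => Fin 10
  | (n + 3) => Fin 10 ⊕ (ANDVert (n + 2) ⊕ ANDVert (n + 2))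

/-- The out-terminal `a₀` of `AND_ℓ`. -/
def ANDa0 : (ℓ : ℕ) → ANDVert ℓ
  | 0 => (0 : Fin 4)
  | 1 => (0 : Fin 4)
  | 2 => (0 : Fin 10)
  | (_ + 3) => Sum.inl (0 : Fin 10)

/-- The out-terminal `a₁` of `AND_ℓ`. -/
def ANDa1 : (ℓ : ℕ) → ANDVert ℓ
  | 0 => (1 : Fin 4)
  | 1 => (1 : Fin 4)
  | 2 => (1 : Fin 10)
  | (_ + 3) => Sum.inl (1 : Fin 10)

/-- The in-terminal `b_i` of `AND_ℓ` (only the values `i < 2^ℓ` are meaningful);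
for `ℓ ≥ 3` the in-terminal sequence is the concatenation of the in-terminal
sequences of the two sub-gadgets. -/
def ANDb : (ℓ : ℕ) → ℕ → ANDVert ℓ
  | 0, _ => (2 : Fin 4)
  | 1, i => if i = 0 then (2 : Fin 4) else (3 : Fin 4)
  | 2, i => (match i with | 0 => 2 | 1 => 3 | 2 => 4 | _ => 5 : Fin 10)
  | (n + 3), i =>
      if i < 2 ^ (n + 2) then Sum.inr (Sum.inl (ANDb (n + 2) i))
      else Sum.inr (Sum.inr (ANDb (n + 2) (i - 2 ^ (n + 2))))

/-- The edges of the gadget `AND₂` (the Cai–Fürer–Immerman gadget):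
`a₀c₀, a₀c₁, a₁c₂, a₁c₃, b₀c₀, b₀c₂, b₁c₁, b₁c₃, b₂c₁, b₂c₂, b₃c₀, b₃c₃`. -/
def AND2rel (u v : Fin 10) : Prop :=
  (u, v) ∈ ([(0, 6), (0, 7), (1, 8), (1, 9), (2, 6), (2, 8), (3, 7), (3, 9),
             (4, 7), (4, 8), (5, 6), (5, 9)] : List (Fin 10 × Fin 10))

/-- The edge relation of the gadget `AND_ℓ`: for `ℓ = 1` the edges `a₀b₀, a₁b₁`; for
`ℓ = 2` the CFI gadget; for `ℓ ≥ 3` the edges inside the three sub-gadgets together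
with the four edges joining the in-terminal pairs `(b₀,b₁)` resp. `(b₂,b₃)` of the top
copy of `AND₂` to the out-terminals of the two copies of `AND_{ℓ-1}`. -/
def ANDrel : (ℓ : ℕ) → ANDVert ℓ → ANDVert ℓ → Prop
  | 0 => fun _ _ => False
  | 1 => fun u v => (u = (0 : Fin 4) ∧ v = (2 : Fin 4)) ∨ (u = (1 : Fin 4) ∧ v = (3 : Fin 4))
  | 2 => AND2rel
  | (n + 3) => fun u v =>
      match u, v with
      | Sum.inl x, Sum.inl y => AND2rel x y
      | Sum.inr (Sum.inl x), Sum.inr (Sum.inl y) => ANDrel (n + 2) x y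
      | Sum.inr (Sum.inr x), Sum.inr (Sum.inr y) => ANDrel (n + 2) x y
      | Sum.inl x, Sum.inr (Sum.inl y) =>
          (x = 2 ∧ y = ANDa0 (n + 2)) ∨ (x = 3 ∧ y = ANDa1 (n + 2))
      | Sum.inl x, Sum.inr (Sum.inr y) =>
          (x = 4 ∧ y = ANDa0 (n + 2)) ∨ (x = 5 ∧ y = ANDa1 (n + 2))
      | _, _ => False

/-- The gadget `AND_ℓ` as a simple graph. -/
def ANDgraph (ℓ : ℕ) : SimpleGraph (ANDVert ℓ) := SimpleGraph.fromRel (ANDrel ℓ)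

/-- The set of in-terminals of `AND_ℓ`. -/
def ANDins (ℓ : ℕ) : Set (ANDVert ℓ) := ANDb ℓ '' Set.Iio (2 ^ ℓ)

/-- The binary block of in-terminals `{b_i : q·2^(ℓ-j) ≤ i < (q+1)·2^(ℓ-j)}`. -/
def binBlock (ℓ j q : ℕ) : Set (ANDVert ℓ) :=
  ANDb ℓ '' Set.Ico (q * 2 ^ (ℓ - j)) ((q + 1) * 2 ^ (ℓ - j))

/-- `ψ` is a partition of the set of in-terminals of `AND_ℓ` into binary blocks. -/
def IsBinBlockPartition (ℓ : ℕ) (ψ : Set (Set (ANDVert ℓ))) : Prop :=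
  (∀ C ∈ ψ, ∃ j ≤ ℓ, ∃ q < 2 ^ j, C = binBlock ℓ j q) ∧
  ⋃₀ ψ = ANDins ℓ ∧ ψ.PairwiseDisjoint id

/-- The partition `ρ` of `V` refines the partition `ψ` of a subset of `V`
(that is, it refines `ψ ∪ {V ∖ ⋃₀ ψ}`). -/
def RefinesCells {V : Type*} (ρ : Setoid V) (ψ : Set (Set V)) : Prop :=
  ∀ u v, ρ.r u v → (∃ C ∈ ψ, u ∈ C ∧ v ∈ C) ∨ (u ∉ ⋃₀ ψ ∧ v ∉ ⋃₀ ψ)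

/-- The partition induced by `ρ` on `⋃₀ ψ` equals `ψ`. -/
def AgreesWith {V : Type*} (ρ : Setoid V) (ψ : Set (Set V)) : Prop :=
  ∀ u ∈ ⋃₀ ψ, ∀ v ∈ ⋃₀ ψ, (ρ.r u v ↔ ∃ C ∈ ψ, u ∈ C ∧ v ∈ C)

/-- `ρ` is the coarsest stable partition (for `G`) refining the partition `ψ`
of a subset of the vertex set. -/
def IsCoarsestStableRefining {V : Type*} (G : SimpleGraph V) (ψ : Set (Set V))
    (ρ : Setoid V) : Prop :=
  IsStable G ρ ∧ RefinesCells ρ ψ ∧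
    ∀ σ : Setoid V, IsStable G σ → RefinesCells σ ψ → Finer σ ρ

/-!
Each binary block `(j, q)` of in-terminals is mapped onto itself by an involutive automorphism
of the gadget exchanging its two halves and fixing every other in-terminal; for an in-terminal
pair it also exchanges `a₀` and `a₁`. The orbit partition of such an involution is stable and,
when the block lies in a cell of `ψ`, refines `ψ`, so the coarsest stable partition merges every
vertex with its image. By induction on the block size this merges every cell of `ψ`, and a cell
containing a pair merges `a₀` with `a₁`. Conversely, if `ψ` splits every pair, all its cells are
singletons, and stability propagates individualisation from the in-terminals through each copy
of `AND₂` up to the out-terminals.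
-/

section StablePartition

variable {V : Type*} {G : SimpleGraph V} {ρ : Setoid V}

def IsSingletonCell (ρ : Setoid V) (w : V) : Prop :=
  ∀ u, ρ.r u w → u = w

lemma IsSingletonCell.setOf_rel_eq {s : V} (hs : IsSingletonCell ρ s) :
    {x | ρ.r x s} = {s} :=
  Set.ext fun x => ⟨hs x, fun h => h ▸ ρ.refl x⟩

lemma IsSingletonCell.eq_of_rel {s u : V} (hs : IsSingletonCell ρ s) (h : ρ.r s u) : u = s :=
  hs u (ρ.symm h)

open Classical in
lemma cellDeg_of_isSingletonCell {s : V} (hs : IsSingletonCell ρ s) (u : V) :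
    cellDeg G ρ u s = if G.Adj u s then 1 else 0 := by
  unfold cellDeg
  rw [hs.setOf_rel_eq]
  split_ifs with h
  · rw [Set.inter_eq_right.mpr (Set.singleton_subset_iff.mpr (show s ∈ G.neighborSet u from h)),
      Set.ncard_singleton]
  · rw [Set.inter_singleton_eq_empty.mpr (show s ∉ G.neighborSet u from h), Set.ncard_empty]

lemma IsStable.adj_iff_of_rel (hst : IsStable G ρ) {s u v : V} (hs : IsSingletonCell ρ s)
    (huv : ρ.r u v) : G.Adj u s ↔ G.Adj v s := by
  have := hst u v huv s
  rw [cellDeg_of_isSingletonCell hs, cellDeg_of_isSingletonCell hs] at this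
  split_ifs at this <;> simp_all

def involutionSetoid {φ : V → V} (hφ : Function.Involutive φ) : Setoid V where
  r x y := y = x ∨ y = φ x
  iseqv := by
    refine ⟨fun x => .inl rfl, ?_, ?_⟩
    · rintro x y (rfl | rfl)
      exacts [.inl rfl, .inr (hφ x).symm]
    · rintro x y z (rfl | rfl) (rfl | rfl)
      exacts [.inl rfl, .inr rfl, .inr rfl, .inl (hφ x)]

lemma isStable_involutionSetoid {φ : V → V} (hφ : Function.Involutive φ)
    (hadj : ∀ x y, G.Adj (φ x) (φ y) ↔ G.Adj x y) : IsStable G (involutionSetoid hφ) := by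
  rintro u v (rfl | rfl) w
  · rfl
  have hcell : ∀ x, (involutionSetoid hφ).r (φ x) w ↔ (involutionSetoid hφ).r x w := by
    intro x
    change w = φ x ∨ w = φ (φ x) ↔ w = x ∨ w = φ x
    rw [hφ x, or_comm]
  have hset : G.neighborSet (φ u) ∩ {x | (involutionSetoid hφ).r x w} =
      φ ⁻¹' (G.neighborSet u ∩ {x | (involutionSetoid hφ).r x w}) := by
    ext x
    simp only [Set.mem_inter_iff, Set.mem_preimage, SimpleGraph.mem_neighborSet,
      Set.mem_ofPred_eq, hcell]
    rw [← hadj u (φ x), hφ x]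
  unfold cellDeg
  rw [hset, ← hφ.image_eq_preimage_symm, Set.ncard_image_of_injective _ hφ.injective]

/-- The orbit partition of `φ` is stable and refines `ψ`. -/
lemma IsCoarsestStableRefining.rel_apply {ψ : Set (Set V)}
    (hρ : IsCoarsestStableRefining G ψ ρ) {φ : V → V} (hφ : Function.Involutive φ)
    (hadj : ∀ x y, G.Adj (φ x) (φ y) ↔ G.Adj x y) (hψ : ∀ C ∈ ψ, ∀ x ∈ C, φ x ∈ C) (x : V) :
    ρ.r x (φ x) := by
  refine hρ.2.2 _ (isStable_involutionSetoid hφ hadj) ?_ x (φ x) (.inr rfl)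
  intro u v huv
  by_cases hu : u ∈ ⋃₀ ψ
  · obtain ⟨C, hC, huC⟩ := hu
    refine .inl ⟨C, hC, huC, ?_⟩
    rcases huv with rfl | rfl
    exacts [huC, hψ C hC _ huC]
  · refine .inr ⟨hu, fun ⟨C, hC, hvC⟩ => hu ⟨C, hC, ?_⟩⟩
    rcases huv with rfl | rfl
    exacts [hvC, by simpa only [hφ u] using hψ C hC _ hvC]

/-- Lets the individualisation argument run on a copy of `G` inside a larger graph `H`: away from
the ports `O`, the copy has no neighbours outside itself except singleton cells. -/
def IsAttachedVia {W : Type*} {H : SimpleGraph W} (ρ : Setoid W) (f : G ↪g H) (O : Set V) :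
    Prop :=
  ∀ x w, H.Adj (f x) w → w ∉ Set.range f → x ∉ O → IsSingletonCell ρ w

lemma isAttachedVia_refl (O : Set V) : IsAttachedVia ρ (SimpleGraph.Embedding.refl : G ↪g G) O :=
  fun _ w _ hw => absurd ⟨w, rfl⟩ hw

lemma IsAttachedVia.comp {V' W : Type*} {G' : SimpleGraph V'} {H : SimpleGraph W}
    {ρ : Setoid W} {f : G ↪g H} {O : Set V} (hf : IsAttachedVia ρ f O) (e : G' ↪g G)
    {O' : Set V'} (hO : ∀ x ∉ O', e x ∉ O)
    (he : ∀ x z, G.Adj (e x) z → z ∉ Set.range e → x ∉ O' → IsSingletonCell ρ (f z)) :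
    IsAttachedVia ρ (f.comp e) O' := by
  intro x w hxw hw hx
  by_cases hwf : w ∈ Set.range f
  · obtain ⟨z, rfl⟩ := hwf
    exact he x z (f.map_adj_iff.mp hxw) (fun ⟨y, hy⟩ => hw ⟨y, by simp [hy]⟩) hx
  · exact hf (e x) w hxw hwf (hO x hx)

lemma IsStable.isSingletonCell_insert {W : Type*} {H : SimpleGraph W} {ρ : Setoid W}
    (hst : IsStable H ρ) {f : G ↪g H} {O : Set V} (hf : IsAttachedVia ρ f O)
    {K : Set V} (hK : ∀ t ∈ K, IsSingletonCell ρ (f t)) {s y : V} (hs : s ∈ K) (hsO : s ∉ O)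
    (hy : G.Adj y s)
    (hsep : ∀ u, G.Adj u s → u = y ∨ u ∈ K ∨ ∃ t ∈ K, G.Adj u t ∧ ¬ G.Adj y t) :
    ∀ t ∈ insert y K, IsSingletonCell ρ (f t) := by
  refine Set.forall_mem_insert.mpr ⟨fun w hw => ?_, hK⟩
  have hws : H.Adj w (f s) := (hst.adj_iff_of_rel (hK s hs) hw).mpr (f.map_adj_iff.mpr hy)
  by_cases hwf : w ∈ Set.range f
  · obtain ⟨u, rfl⟩ := hwf
    rcases hsep u (f.map_adj_iff.mp hws) with rfl | hu | ⟨t, ht, hut, hyt⟩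
    · rfl
    · exact ((hK u hu).eq_of_rel hw).symm
    · exact absurd (f.map_adj_iff.mp ((hst.adj_iff_of_rel (hK t ht) hw).mp
        (f.map_adj_iff.mpr hut))) hyt
  · exact ((hf s w hws.symm hwf hsO).eq_of_rel hw).symm

end StablePartition

attribute [reducible] ANDVert

section Gadget

instance : DecidableRel AND2rel := fun u v => by unfold AND2rel; infer_instance

instance : DecidableRel (ANDrel 1) := fun u v =>
  inferInstanceAs (Decidable ((u = (0 : Fin 4) ∧ v = 2) ∨ (u = 1 ∧ v = 3)))

instance : DecidableRel (ANDrel 2) := fun u v => inferInstanceAs (Decidable (AND2rel u v))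

instance (ℓ : ℕ) [DecidableEq (ANDVert ℓ)] [DecidableRel (ANDrel ℓ)] :
    DecidableRel (ANDgraph ℓ).Adj := fun _ _ =>
  decidable_of_iff _ (SimpleGraph.fromRel_adj _ _ _).symm

lemma ANDrel_irrefl : ∀ (ℓ : ℕ) (x : ANDVert ℓ), ¬ ANDrel ℓ x x
  | 0, _ => id
  | 1, x => by revert x; decide
  | 2, x => by revert x; decide
  | _ + 3, .inl x => ANDrel_irrefl 2 x
  | n + 3, .inr (.inl x) => ANDrel_irrefl (n + 2) x
  | n + 3, .inr (.inr x) => ANDrel_irrefl (n + 2) x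

lemma ANDgraph_adj {ℓ : ℕ} {x y : ANDVert ℓ} :
    (ANDgraph ℓ).Adj x y ↔ ANDrel ℓ x y ∨ ANDrel ℓ y x := by
  rw [ANDgraph, SimpleGraph.fromRel_adj]
  refine and_iff_right_of_imp fun h hxy => ?_
  subst hxy
  exact (or_self _).mp h |> ANDrel_irrefl ℓ x

lemma ANDa0_ne_ANDa1 : ∀ ℓ : ℕ, ANDa0 ℓ ≠ ANDa1 ℓ
  | 0 | 1 | 2 => by decide
  | _ + 3 => fun h => absurd (Sum.inl.inj h) (by decide)

lemma ANDb_add_three_of_lt {n i : ℕ} (hi : i < 2 ^ (n + 2)) :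
    ANDb (n + 3) i = .inr (.inl (ANDb (n + 2) i)) :=
  if_pos hi

lemma ANDb_add_three_add (n i : ℕ) :
    ANDb (n + 3) (2 ^ (n + 2) + i) = .inr (.inr (ANDb (n + 2) i)) := by
  rw [ANDb, if_neg (by omega), Nat.add_sub_cancel_left]

lemma ANDrel_sumMap {n : ℕ} {f : Fin 10 → Fin 10} {g h : ANDVert (n + 2) → ANDVert (n + 2)}
    (hf : ∀ x y, AND2rel (f x) (f y) ↔ AND2rel x y)
    (hg : ∀ x y, ANDrel (n + 2) (g x) (g y) ↔ ANDrel (n + 2) x y)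
    (hh : ∀ x y, ANDrel (n + 2) (h x) (h y) ↔ ANDrel (n + 2) x y)
    (hfg : ∀ x y, (f x = 2 ∧ g y = ANDa0 (n + 2) ∨ f x = 3 ∧ g y = ANDa1 (n + 2)) ↔
      (x = 2 ∧ y = ANDa0 (n + 2) ∨ x = 3 ∧ y = ANDa1 (n + 2)))
    (hfh : ∀ x y, (f x = 4 ∧ h y = ANDa0 (n + 2) ∨ f x = 5 ∧ h y = ANDa1 (n + 2)) ↔
      (x = 4 ∧ y = ANDa0 (n + 2) ∨ x = 5 ∧ y = ANDa1 (n + 2)))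
    (x y : ANDVert (n + 3)) :
    ANDrel (n + 3) (Sum.map f (Sum.map g h) x) (Sum.map f (Sum.map g h) y) ↔
      ANDrel (n + 3) x y := by
  rcases x with x | x | x <;> rcases y with y | y | y
  exacts [hf x y, hfg x y, hfh x y, Iff.rfl, hg x y, Iff.rfl, Iff.rfl, Iff.rfl, hh x y]

end Gadget

section Involution

lemma Function.Involutive.sumMap {α β : Type*} {f : α → α} {g : β → β}
    (hf : Function.Involutive f) (hg : Function.Involutive g) :
    Function.Involutive (Sum.map f g) := by
  rintro (x | x)
  exacts [congrArg Sum.inl (hf x), congrArg Sum.inr (hg x)]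

lemma Function.Involutive.pair_iff {α β : Type*} {f : α → α} {g : β → β}
    (hf : Function.Involutive f) (hg : Function.Involutive g) {p p' : α} {a a' : β}
    (h : (f p = p ∧ f p' = p' ∧ g a = a ∧ g a' = a') ∨
      (f p = p' ∧ f p' = p ∧ g a = a' ∧ g a' = a)) (x : α) (y : β) :
    (f x = p ∧ g y = a ∨ f x = p' ∧ g y = a') ↔ (x = p ∧ y = a ∨ x = p' ∧ y = a') := by
  simp only [hf.eq_iff, hg.eq_iff]
  rcases h with ⟨h₁, h₂, h₃, h₄⟩ | ⟨h₁, h₂, h₃, h₄⟩ <;> rw [h₁, h₂, h₃, h₄]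
  exact or_comm

lemma Function.Involutive.ite_id {α : Type*} {f : α → α} (hf : Function.Involutive f)
    (c : Prop) [Decidable c] : Function.Involutive (if c then f else id) := by
  split_ifs
  exacts [hf, fun _ => rfl]

end Involution

section BlockSwap

/- Automorphisms of `AND₁` and `AND₂` in the numbering of `ANDVert`: `and2SwapHalves` exchanges
the in-terminal pairs `(b₀,b₁) ↔ (b₂,b₃)` and fixes `a₀, a₁`; `and2SwapLow` (`and2SwapHigh`)
exchanges `b₀ ↔ b₁` (`b₂ ↔ b₃`) and thereby `a₀ ↔ a₁`, as does `and1Swap`. -/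
def and1Swap : Fin 4 → Fin 4 := ![1, 0, 3, 2]
def and2SwapHalves : Fin 10 → Fin 10 := ![0, 1, 4, 5, 2, 3, 7, 6, 8, 9]
def and2SwapLow : Fin 10 → Fin 10 := ![1, 0, 3, 2, 4, 5, 9, 8, 7, 6]
def and2SwapHigh : Fin 10 → Fin 10 := ![1, 0, 2, 3, 5, 4, 8, 9, 6, 7]

/-- The automorphism of `AND_ℓ` exchanging the two halves of the binary block `(j, q)`: it acts
on the `AND₂` node of that block (exchanging its sub-gadgets as well) and, when the block is an
in-terminal pair, flips the out-terminals of every `AND₂` node on the way up to the root. -/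
def blockSwap : (ℓ j q : ℕ) → ANDVert ℓ → ANDVert ℓ
  | 1, 0, _ => and1Swap
  | 2, 0, _ => and2SwapHalves
  | 2, 1, q => if q = 0 then and2SwapLow else and2SwapHigh
  | _ + 3, 0, _ => Sum.map and2SwapHalves Sum.swap
  | n + 3, j + 1, q =>
      if q < 2 ^ j then
        Sum.map (if j = n + 1 then and2SwapLow else id) (Sum.map (blockSwap (n + 2) j q) id)
      else
        Sum.map (if j = n + 1 then and2SwapHigh else id)
          (Sum.map id (blockSwap (n + 2) j (q - 2 ^ j)))
  | _, _, _ => id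

lemma and1Swap_involutive : Function.Involutive and1Swap := by
  unfold Function.Involutive; decide

lemma and2SwapHalves_involutive : Function.Involutive and2SwapHalves := by
  unfold Function.Involutive; decide

lemma and2SwapLow_involutive : Function.Involutive and2SwapLow := by
  unfold Function.Involutive; decide

lemma and2SwapHigh_involutive : Function.Involutive and2SwapHigh := by
  unfold Function.Involutive; decide

lemma AND2rel_and2SwapHalves :
    ∀ x y, AND2rel (and2SwapHalves x) (and2SwapHalves y) ↔ AND2rel x y := by
  decide

lemma AND2rel_and2SwapLow : ∀ x y, AND2rel (and2SwapLow x) (and2SwapLow y) ↔ AND2rel x y := by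
  decide

lemma AND2rel_and2SwapHigh : ∀ x y, AND2rel (and2SwapHigh x) (and2SwapHigh y) ↔ AND2rel x y := by
  decide

lemma blockSwap_involutive : ∀ ℓ j q : ℕ, Function.Involutive (blockSwap ℓ j q)
  | 0, _, _ | 1, _ + 1, _ | 2, _ + 2, _ => fun _ => rfl
  | 1, 0, _ => and1Swap_involutive
  | 2, 0, _ => and2SwapHalves_involutive
  | 2, 1, q => show Function.Involutive (if q = 0 then and2SwapLow else and2SwapHigh) by
      split_ifs
      exacts [and2SwapLow_involutive, and2SwapHigh_involutive]
  | _ + 3, 0, _ => and2SwapHalves_involutive.sumMap Sum.swap_swap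
  | n + 3, j + 1, q => by
      unfold blockSwap
      by_cases hq : q < 2 ^ j
      · rw [if_pos hq]
        exact (and2SwapLow_involutive.ite_id _).sumMap
          ((blockSwap_involutive _ _ _).sumMap fun _ => rfl)
      · rw [if_neg hq]
        exact (and2SwapHigh_involutive.ite_id _).sumMap
          (Function.Involutive.sumMap (fun _ => rfl) (blockSwap_involutive _ _ _))

lemma blockSwap_ANDa0 : ∀ ℓ j q : ℕ,
    blockSwap ℓ j q (ANDa0 ℓ) = if j + 1 = ℓ then ANDa1 ℓ else ANDa0 ℓ
  | 0, _, _ | 1, _ + 1, _ | 2, _ + 2, _ | 2, 0, _ | _ + 3, 0, _ => by rw [if_neg (by omega)]; rfl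
  | 1, 0, _ => rfl
  | 2, 1, q => by
      show (if q = 0 then and2SwapLow else and2SwapHigh) 0 = 1
      split_ifs <;> rfl
  | n + 3, j + 1, q => by
      unfold blockSwap
      by_cases hj : j = n + 1 <;> split_ifs <;> first | rfl | omega

lemma blockSwap_ANDa1 : ∀ ℓ j q : ℕ,
    blockSwap ℓ j q (ANDa1 ℓ) = if j + 1 = ℓ then ANDa0 ℓ else ANDa1 ℓ
  | 0, _, _ | 1, _ + 1, _ | 2, _ + 2, _ | 2, 0, _ | _ + 3, 0, _ => by rw [if_neg (by omega)]; rfl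
  | 1, 0, _ => rfl
  | 2, 1, q => by
      show (if q = 0 then and2SwapLow else and2SwapHigh) 1 = 0
      split_ifs <;> rfl
  | n + 3, j + 1, q => by
      unfold blockSwap
      by_cases hj : j = n + 1 <;> split_ifs <;> first | rfl | omega

lemma ANDrel_sumMap_swap {n : ℕ} (x y : ANDVert (n + 3)) :
    ANDrel (n + 3) (Sum.map and2SwapHalves Sum.swap x) (Sum.map and2SwapHalves Sum.swap y) ↔
      ANDrel (n + 3) x y := by
  have h := and2SwapHalves_involutive
  rcases x with x | x | x <;> rcases y with y | y | y
  · exact AND2rel_and2SwapHalves x y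
  · show (and2SwapHalves x = 4 ∧ _ ∨ and2SwapHalves x = 5 ∧ _) ↔ _
    rw [h.eq_iff, h.eq_iff]
    rfl
  · show (and2SwapHalves x = 2 ∧ _ ∨ and2SwapHalves x = 3 ∧ _) ↔ _
    rw [h.eq_iff, h.eq_iff]
    rfl
  all_goals exact Iff.rfl

/-- A pair swap in a sub-gadget (`j = n + 1`) exchanges its out-terminals, so the top copy of
`AND₂` has to exchange the in-terminals `p, p'` glued to them. -/
lemma blockSwap_gluing_iff {n : ℕ} (j q : ℕ) {f : Fin 10 → Fin 10} {p p' : Fin 10}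
    (hf : Function.Involutive f)
    (hfp : j = n + 1 → f p = p' ∧ f p' = p) (hfp' : j ≠ n + 1 → f p = p ∧ f p' = p') :
    ∀ x y, (f x = p ∧ blockSwap (n + 2) j q y = ANDa0 (n + 2) ∨
        f x = p' ∧ blockSwap (n + 2) j q y = ANDa1 (n + 2)) ↔
      (x = p ∧ y = ANDa0 (n + 2) ∨ x = p' ∧ y = ANDa1 (n + 2)) := by
  refine hf.pair_iff (blockSwap_involutive _ _ _) ?_
  rw [blockSwap_ANDa0, blockSwap_ANDa1]
  by_cases hj : j = n + 1
  · rw [if_pos (by omega), if_pos (by omega)]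
    exact .inr ⟨(hfp hj).1, (hfp hj).2, rfl, rfl⟩
  · rw [if_neg (by omega), if_neg (by omega)]
    exact .inl ⟨(hfp' hj).1, (hfp' hj).2, rfl, rfl⟩

lemma blockSwap_rel : ∀ (ℓ j q : ℕ) (x y : ANDVert ℓ),
    ANDrel ℓ (blockSwap ℓ j q x) (blockSwap ℓ j q y) ↔ ANDrel ℓ x y
  | 0, _, _ | 1, _ + 1, _ | 2, _ + 2, _ => fun _ _ => Iff.rfl
  | 1, 0, _ => show ∀ x y : Fin 4, ANDrel 1 (and1Swap x) (and1Swap y) ↔ ANDrel 1 x y by decide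
  | 2, 0, _ => AND2rel_and2SwapHalves
  | 2, 1, q => by
      show ∀ x y, AND2rel ((if q = 0 then and2SwapLow else and2SwapHigh) x)
        ((if q = 0 then and2SwapLow else and2SwapHigh) y) ↔ AND2rel x y
      split_ifs
      exacts [AND2rel_and2SwapLow, AND2rel_and2SwapHigh]
  | _ + 3, 0, _ => ANDrel_sumMap_swap
  | n + 3, j + 1, q => by
      unfold blockSwap
      by_cases hq : q < 2 ^ j
      · rw [if_pos hq]
        have hf := and2SwapLow_involutive.ite_id (j = n + 1)
        refine ANDrel_sumMap ?_ (blockSwap_rel _ _ _) (fun _ _ => Iff.rfl)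
          (blockSwap_gluing_iff j q hf (fun hj => by rw [if_pos hj]; exact ⟨rfl, rfl⟩)
            (fun hj => by rw [if_neg hj]; exact ⟨rfl, rfl⟩))
          (hf.pair_iff (fun _ => rfl) (.inl ⟨?_, ?_, rfl, rfl⟩))
        all_goals split_ifs
        exacts [AND2rel_and2SwapLow, fun _ _ => Iff.rfl, rfl, rfl, rfl, rfl]
      · rw [if_neg hq]
        have hf := and2SwapHigh_involutive.ite_id (j = n + 1)
        refine ANDrel_sumMap ?_ (fun _ _ => Iff.rfl) (blockSwap_rel _ _ _)
          (hf.pair_iff (fun _ => rfl) (.inl ⟨?_, ?_, rfl, rfl⟩))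
          (blockSwap_gluing_iff j (q - 2 ^ j) hf (fun hj => by rw [if_pos hj]; exact ⟨rfl, rfl⟩)
            (fun hj => by rw [if_neg hj]; exact ⟨rfl, rfl⟩))
        all_goals split_ifs
        exacts [AND2rel_and2SwapHigh, fun _ _ => Iff.rfl, rfl, rfl, rfl, rfl]

lemma blockSwap_adj (ℓ j q : ℕ) (x y : ANDVert ℓ) :
    (ANDgraph ℓ).Adj (blockSwap ℓ j q x) (blockSwap ℓ j q y) ↔ (ANDgraph ℓ).Adj x y := by
  rw [ANDgraph_adj, ANDgraph_adj, blockSwap_rel, blockSwap_rel]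

end BlockSwap

section InTerminals

lemma two_pow_mul_two_pow {j m ℓ : ℕ} (h : j + m = ℓ) : 2 ^ j * 2 ^ m = 2 ^ ℓ := by
  rw [← pow_add, h]

lemma blockSwap_ANDb_lowerHalf : ∀ ℓ j m q r : ℕ, j + m + 1 = ℓ → q < 2 ^ j → r < 2 ^ m →
    blockSwap ℓ j q (ANDb ℓ (q * 2 ^ (m + 1) + r)) = ANDb ℓ (q * 2 ^ (m + 1) + 2 ^ m + r)
  | 0, _, _, _, _, h, _, _ | 1, _ + 1, _, _, _, h, _, _ | 2, _ + 2, _, _, _, h, _, _ => by omega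
  | 1, 0, m, q, r, h, hq, hr => by
      obtain rfl : m = 0 := by omega
      obtain rfl : q = 0 := by omega
      obtain rfl : r = 0 := by omega
      rfl
  | 2, 0, m, q, r, h, hq, hr => by
      obtain rfl : m = 1 := by omega
      obtain rfl : q = 0 := by omega
      interval_cases r <;> rfl
  | 2, 1, m, q, r, h, hq, hr => by
      obtain rfl : m = 0 := by omega
      obtain rfl : r = 0 := by omega
      interval_cases q <;> rfl
  | n + 3, 0, m, q, r, h, hq, hr => by
      obtain rfl : m = n + 2 := by omega
      obtain rfl : q = 0 := by omega
      simp only [zero_mul, zero_add]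
      rw [ANDb_add_three_of_lt hr, ANDb_add_three_add]
      rfl
  | n + 3, j + 1, m, q, r, h, hq, hr => by
      have hpow := two_pow_mul_two_pow (show j + (m + 1) = n + 2 by omega)
      have hsucc : 2 ^ (m + 1) = 2 * 2 ^ m := by ring
      unfold blockSwap
      by_cases hq' : q < 2 ^ j
      · have hlt : (q + 1) * 2 ^ (m + 1) ≤ 2 ^ (n + 2) := hpow ▸ Nat.mul_le_mul_right _ hq'
        rw [add_mul, one_mul] at hlt
        rw [if_pos hq', ANDb_add_three_of_lt (by omega), ANDb_add_three_of_lt (by omega)]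
        exact congrArg (fun x => Sum.inr (Sum.inl x))
          (blockSwap_ANDb_lowerHalf (n + 2) j m q r (by omega) hq' hr)
      · obtain ⟨q', rfl⟩ := Nat.exists_eq_add_of_le (not_lt.mp hq')
        have hq'' : q' < 2 ^ j := by rw [pow_succ] at hq; omega
        have hidx : ∀ s, (2 ^ j + q') * 2 ^ (m + 1) + s = 2 ^ (n + 2) + (q' * 2 ^ (m + 1) + s) :=
          fun s => by rw [add_mul, hpow, add_assoc]
        rw [if_neg hq', hidx, add_assoc, hidx, ANDb_add_three_add, ANDb_add_three_add,
          Nat.add_sub_cancel_left, ← add_assoc]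
        exact congrArg (fun x => Sum.inr (Sum.inr x))
          (blockSwap_ANDb_lowerHalf (n + 2) j m q' r (by omega) hq'' hr)

lemma blockSwap_ANDb_of_not_mem : ∀ ℓ j m q i : ℕ, j + m = ℓ → q < 2 ^ j → i < 2 ^ ℓ →
    i < q * 2 ^ m ∨ (q + 1) * 2 ^ m ≤ i → blockSwap ℓ j q (ANDb ℓ i) = ANDb ℓ i
  | 0, _, _, _, _, _, _, _, _ | 1, _ + 1, _, _, _, _, _, _, _ | 2, _ + 2, _, _, _, _, _, _, _ => rfl
  | 1, 0, m, q, i, h, hq, hi, hout | 2, 0, m, q, i, h, hq, hi, hout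
  | _ + 3, 0, m, q, i, h, hq, hi, hout => by
      obtain rfl : q = 0 := by omega
      rw [zero_add] at h
      subst h
      simp only [zero_mul, zero_add, one_mul] at hout
      omega
  | 2, 1, m, q, i, h, hq, hi, hout => by
      obtain rfl : m = 1 := by omega
      interval_cases q <;> interval_cases i <;> first | rfl | omega
  | n + 3, j + 1, m, q, i, h, hq, hi, hout => by
      have hpow := two_pow_mul_two_pow (show j + m = n + 2 by omega)
      unfold blockSwap
      by_cases hq' : q < 2 ^ j <;> by_cases hi' : i < 2 ^ (n + 2)
      · rw [if_pos hq', ANDb_add_three_of_lt hi']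
        exact congrArg (fun x => Sum.inr (Sum.inl x))
          (blockSwap_ANDb_of_not_mem (n + 2) j m q i (by omega) hq' hi' hout)
      · obtain ⟨i', rfl⟩ := Nat.exists_eq_add_of_le (not_lt.mp hi')
        rw [if_pos hq', ANDb_add_three_add]
        rfl
      · rw [if_neg hq', ANDb_add_three_of_lt hi']
        rfl
      · obtain ⟨q', rfl⟩ := Nat.exists_eq_add_of_le (not_lt.mp hq')
        obtain ⟨i', rfl⟩ := Nat.exists_eq_add_of_le (not_lt.mp hi')
        have hq'' : q' < 2 ^ j := by rw [pow_succ] at hq; omega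
        have hi'' : i' < 2 ^ (n + 2) := by rw [pow_succ 2 (n + 2)] at hi; omega
        have e₁ : (2 ^ j + q') * 2 ^ m = 2 ^ (n + 2) + q' * 2 ^ m := by rw [add_mul, hpow]
        have e₂ : (2 ^ j + q' + 1) * 2 ^ m = 2 ^ (n + 2) + (q' + 1) * 2 ^ m := by
          rw [add_assoc, add_mul, hpow]
        rw [if_neg hq', ANDb_add_three_add, Nat.add_sub_cancel_left]
        exact congrArg (fun x => Sum.inr (Sum.inr x))
          (blockSwap_ANDb_of_not_mem (n + 2) j m q' i' (by omega) hq'' hi'' (by omega))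

end InTerminals

section BinaryBlocks

variable {ℓ : ℕ} {ψ : Set (Set (ANDVert ℓ))}

lemma binBlock_eq {j m : ℕ} (q : ℕ) (h : j + m = ℓ) :
    binBlock ℓ j q = ANDb ℓ '' Set.Ico (q * 2 ^ m) ((q + 1) * 2 ^ m) := by
  rw [binBlock, show ℓ - j = m by omega]

lemma binBlock_mapsTo_blockSwap {j m q : ℕ} (h : j + (m + 1) = ℓ) (hq : q < 2 ^ j) :
    Set.MapsTo (blockSwap ℓ j q) (binBlock ℓ j q) (binBlock ℓ j q) := by
  rw [binBlock_eq q h]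
  rintro _ ⟨i, ⟨hi₁, hi₂⟩, rfl⟩
  obtain ⟨r, rfl⟩ := Nat.exists_eq_add_of_le hi₁
  have hsucc : 2 ^ (m + 1) = 2 * 2 ^ m := by ring
  by_cases hr : r < 2 ^ m
  · rw [blockSwap_ANDb_lowerHalf ℓ j m q r (by omega) hq hr]
    exact ⟨_, ⟨by omega, by rw [add_mul, one_mul]; omega⟩, rfl⟩
  · obtain ⟨r, rfl⟩ := Nat.exists_eq_add_of_le (not_lt.mp hr)
    have hr' : r < 2 ^ m := by rw [add_mul, one_mul] at hi₂; omega
    rw [← add_assoc, ← blockSwap_ANDb_lowerHalf ℓ j m q r (by omega) hq hr',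
      blockSwap_involutive]
    exact ⟨_, ⟨by omega, by rw [add_mul, one_mul]; omega⟩, rfl⟩

lemma IsBinBlockPartition.exists_ANDb (hψ : IsBinBlockPartition ℓ ψ) {C : Set (ANDVert ℓ)}
    (hC : C ∈ ψ) {x : ANDVert ℓ} (hx : x ∈ C) : ∃ i < 2 ^ ℓ, ANDb ℓ i = x :=
  show x ∈ ANDins ℓ from hψ.2.1 ▸ ⟨C, hC, hx⟩

lemma IsBinBlockPartition.eq_of_mem (hψ : IsBinBlockPartition ℓ ψ) {C C' : Set (ANDVert ℓ)}
    (hC : C ∈ ψ) (hC' : C' ∈ ψ) {x : ANDVert ℓ} (hx : x ∈ C) (hx' : x ∈ C') : C = C' :=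
  hψ.2.2.elim hC hC' (Set.not_disjoint_iff.mpr ⟨x, hx, hx'⟩)

variable {ρ : Setoid (ANDVert ℓ)} {C : Set (ANDVert ℓ)}

lemma IsCoarsestStableRefining.rel_blockSwap (hρ : IsCoarsestStableRefining (ANDgraph ℓ) ψ ρ)
    (hψ : IsBinBlockPartition ℓ ψ) {j m q : ℕ} (h : j + (m + 1) = ℓ) (hq : q < 2 ^ j)
    (hC : C ∈ ψ) (hsub : binBlock ℓ j q ⊆ C) (x : ANDVert ℓ) :
    ρ.r x (blockSwap ℓ j q x) := by
  refine hρ.rel_apply (blockSwap_involutive ℓ j q) (blockSwap_adj ℓ j q) ?_ x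
  intro C' hC' x hx
  by_cases hxb : x ∈ binBlock ℓ j q
  · rw [← hψ.eq_of_mem hC hC' (hsub hxb) hx]
    exact hsub (binBlock_mapsTo_blockSwap h hq hxb)
  · obtain ⟨i, hi, rfl⟩ := hψ.exists_ANDb hC' hx
    rw [binBlock_eq q h] at hxb
    rwa [blockSwap_ANDb_of_not_mem ℓ j (m + 1) q i h hq hi (by
      by_contra! hin
      exact hxb ⟨i, hin, rfl⟩)]

/-- The block swap merges the two halves of the block, each of which is merged inductively. -/
lemma IsCoarsestStableRefining.rel_ANDb_of_binBlock_subset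
    (hρ : IsCoarsestStableRefining (ANDgraph ℓ) ψ ρ) (hψ : IsBinBlockPartition ℓ ψ) (hC : C ∈ ψ) :
    ∀ m j q, j + m = ℓ → q < 2 ^ j → binBlock ℓ j q ⊆ C →
      ∀ i ∈ Set.Ico (q * 2 ^ m) ((q + 1) * 2 ^ m), ρ.r (ANDb ℓ i) (ANDb ℓ (q * 2 ^ m))
  | 0, _, q, _, _, _, i, hi => by
      simp only [pow_zero, mul_one, Set.mem_Ico] at hi ⊢
      obtain rfl : i = q := by omega
      exact ρ.refl' _
  | m + 1, j, q, h, hq, hsub, i, ⟨hi₁, hi₂⟩ => by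
      have e₁ : q * 2 ^ (m + 1) = 2 * q * 2 ^ m := by ring
      have e₂ : (q + 1) * 2 ^ (m + 1) = 2 * q * 2 ^ m + 2 * 2 ^ m := by ring
      have e₃ : (2 * q + 1) * 2 ^ m = 2 * q * 2 ^ m + 2 ^ m := by ring
      have hsub₂ : binBlock ℓ (j + 1) (2 * q) ⊆ C := by
        refine subset_trans ?_ hsub
        rw [binBlock_eq _ (show j + 1 + m = ℓ by omega), binBlock_eq q h]
        exact Set.image_mono (Set.Ico_subset_Ico (by omega) (by omega))
      have IH := hρ.rel_ANDb_of_binBlock_subset hψ hC m (j + 1) (2 * q) (by omega)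
        (by rw [pow_succ]; omega) hsub₂
      rw [e₁]
      obtain ⟨r, rfl⟩ := Nat.exists_eq_add_of_le hi₁
      by_cases hr : r < 2 ^ m
      · exact IH _ ⟨by omega, by omega⟩
      · obtain ⟨r, rfl⟩ := Nat.exists_eq_add_of_le (not_lt.mp hr)
        rw [← add_assoc, ← blockSwap_ANDb_lowerHalf ℓ j m q r (by omega) hq (by omega)]
        exact ρ.trans' (ρ.symm' (hρ.rel_blockSwap hψ (m := m) (by omega) hq hC hsub _))
          (IH _ ⟨by omega, by omega⟩)

end BinaryBlocks

section Agreement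

variable {ℓ : ℕ} {ψ : Set (Set (ANDVert ℓ))} {ρ : Setoid (ANDVert ℓ)}

lemma IsCoarsestStableRefining.agreesWith (hρ : IsCoarsestStableRefining (ANDgraph ℓ) ψ ρ)
    (hψ : IsBinBlockPartition ℓ ψ) : AgreesWith ρ ψ := by
  intro u hu v _
  refine ⟨fun huv => (hρ.2.1 u v huv).resolve_right fun h => h.1 hu, ?_⟩
  rintro ⟨C, hC, huC, hvC⟩
  obtain ⟨j, hj, q, hq, rfl⟩ := hψ.1 C hC
  have hrel := hρ.rel_ANDb_of_binBlock_subset hψ hC (ℓ - j) j q (by omega) hq subset_rfl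
  rw [binBlock] at huC hvC
  obtain ⟨i, hi, rfl⟩ := huC
  obtain ⟨i', hi', rfl⟩ := hvC
  exact ρ.trans' (hrel i hi) (ρ.symm' (hrel i' hi'))

lemma IsCoarsestStableRefining.rel_ANDa0_ANDa1 (hρ : IsCoarsestStableRefining (ANDgraph ℓ) ψ ρ)
    (hψ : IsBinBlockPartition ℓ ψ) (hℓ : 1 ≤ ℓ) {p : ℕ} (hp : p < 2 ^ (ℓ - 1))
    {C : Set (ANDVert ℓ)} (hC : C ∈ ψ) (h₀ : ANDb ℓ (2 * p) ∈ C) (h₁ : ANDb ℓ (2 * p + 1) ∈ C) :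
    ρ.r (ANDa0 ℓ) (ANDa1 ℓ) := by
  have hsub : binBlock ℓ (ℓ - 1) p ⊆ C := by
    rw [binBlock_eq p (show ℓ - 1 + 1 = ℓ by omega)]
    rintro _ ⟨i, ⟨hi₁, hi₂⟩, rfl⟩
    obtain rfl | rfl : i = 2 * p ∨ i = 2 * p + 1 := by omega
    exacts [h₀, h₁]
  have := hρ.rel_blockSwap hψ (m := 0) (by omega) hp hC hsub (ANDa0 ℓ)
  rwa [blockSwap_ANDa0, if_pos (by omega)] at this

/-- Every block of more than one in-terminal contains an in-terminal pair. -/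
lemma isSingletonCell_ANDb_of_splits_pairs (hρ : RefinesCells ρ ψ) (hψ : IsBinBlockPartition ℓ ψ)
    (hsplit : ∀ p < 2 ^ (ℓ - 1), ¬ ∃ C ∈ ψ, ANDb ℓ (2 * p) ∈ C ∧ ANDb ℓ (2 * p + 1) ∈ C)
    {i : ℕ} (hi : i < 2 ^ ℓ) : IsSingletonCell ρ (ANDb ℓ i) := by
  intro u hu
  obtain ⟨C, hC, huC, hbC⟩ := (hρ u _ hu).resolve_right fun h => h.2 (hψ.2.1 ▸ ⟨i, hi, rfl⟩)
  obtain ⟨j, hj, q, hq, rfl⟩ := hψ.1 C hC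
  obtain ⟨m, hm⟩ := Nat.exists_eq_add_of_le hj
  rw [binBlock_eq q hm.symm] at huC hbC
  obtain ⟨i₁, hi₁, rfl⟩ := huC
  obtain ⟨i₂, hi₂, hb⟩ := hbC
  cases m with
  | zero =>
    simp only [pow_zero, mul_one, Set.mem_Ico] at hi₁ hi₂
    rw [← hb, show i₁ = i₂ by omega]
  | succ m =>
    refine absurd ⟨_, hC, ?_⟩ (hsplit (q * 2 ^ m) ?_)
    · rw [show ℓ - 1 = j + m by omega, pow_add]
      exact Nat.mul_lt_mul_of_pos_right hq (by positivity)
    · have e₁ : q * 2 ^ (m + 1) = 2 * (q * 2 ^ m) := by ring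
      have e₂ : (q + 1) * 2 ^ (m + 1) = 2 * (q * 2 ^ m) + 2 * 2 ^ m := by ring
      have hpos : 0 < 2 ^ m := by positivity
      rw [binBlock_eq q hm.symm]
      exact ⟨⟨_, ⟨by omega, by omega⟩, rfl⟩, ⟨_, ⟨by omega, by omega⟩, rfl⟩⟩

end Agreement

section Individualisation

lemma ANDgraph_adj_inl_inrInl {n : ℕ} {t : Fin 10} {x : ANDVert (n + 2)} :
    (ANDgraph (n + 3)).Adj (.inl t) (.inr (.inl x)) ↔
      t = 2 ∧ x = ANDa0 (n + 2) ∨ t = 3 ∧ x = ANDa1 (n + 2) :=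
  ANDgraph_adj.trans (or_iff_left id)

lemma ANDgraph_adj_inl_inrInr {n : ℕ} {t : Fin 10} {x : ANDVert (n + 2)} :
    (ANDgraph (n + 3)).Adj (.inl t) (.inr (.inr x)) ↔
      t = 4 ∧ x = ANDa0 (n + 2) ∨ t = 5 ∧ x = ANDa1 (n + 2) :=
  ANDgraph_adj.trans (or_iff_left id)

lemma not_ANDgraph_adj_inrInl_inrInr {n : ℕ} {x y : ANDVert (n + 2)} :
    ¬ (ANDgraph (n + 3)).Adj (.inr (.inl x)) (.inr (.inr y)) :=
  fun h => (ANDgraph_adj.mp h).elim id id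

def ANDgraph.topEmbedding (n : ℕ) : ANDgraph 2 ↪g ANDgraph (n + 3) where
  toFun := .inl
  inj' := Sum.inl_injective
  map_rel_iff' {x y} := ANDgraph_adj.trans (ANDgraph_adj (x := x) (y := y)).symm

def ANDgraph.leftEmbedding (n : ℕ) : ANDgraph (n + 2) ↪g ANDgraph (n + 3) where
  toFun x := .inr (.inl x)
  inj' := Sum.inr_injective.comp Sum.inl_injective
  map_rel_iff' {x y} := ANDgraph_adj.trans (ANDgraph_adj (x := x) (y := y)).symm

def ANDgraph.rightEmbedding (n : ℕ) : ANDgraph (n + 2) ↪g ANDgraph (n + 3) where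
  toFun x := .inr (.inr x)
  inj' := Sum.inr_injective.comp Sum.inr_injective
  map_rel_iff' {x y} := ANDgraph_adj.trans (ANDgraph_adj (x := x) (y := y)).symm

variable {W : Type*} {H : SimpleGraph W} {ρ : Setoid W}

lemma IsStable.isSingletonCell_AND1 (hst : IsStable H ρ) {f : ANDgraph 1 ↪g H}
    (hf : IsAttachedVia ρ f {ANDa0 1, ANDa1 1}) (hb : ∀ i < 2, IsSingletonCell ρ (f (ANDb 1 i)))
    (x : ANDVert 1) : IsSingletonCell ρ (f x) := by
  have h₀ : ∀ t ∈ ({2, 3} : Set (ANDVert 1)), IsSingletonCell ρ (f t) := by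
    rintro t (rfl | rfl)
    exacts [hb 0 (by norm_num), hb 1 (by norm_num)]
  have h₁ := hst.isSingletonCell_insert hf h₀ (s := 2) (y := 0)
    (by decide) (by decide) (by decide) (by decide)
  have h₂ := hst.isSingletonCell_insert hf h₁ (s := 3) (y := 1)
    (by decide) (by decide) (by decide) (by decide)
  exact h₂ x (by revert x; decide)

lemma IsStable.isSingletonCell_AND2 (hst : IsStable H ρ) {f : ANDgraph 2 ↪g H}
    (hf : IsAttachedVia ρ f {ANDa0 2, ANDa1 2}) (hb : ∀ i < 4, IsSingletonCell ρ (f (ANDb 2 i)))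
    (x : ANDVert 2) : IsSingletonCell ρ (f x) := by
  have h₀ : ∀ t ∈ ({2, 3, 4, 5} : Set (ANDVert 2)), IsSingletonCell ρ (f t) := by
    rintro t (rfl | rfl | rfl | rfl)
    exacts [hb 0 (by norm_num), hb 1 (by norm_num), hb 2 (by norm_num), hb 3 (by norm_num)]
  have h₁ := hst.isSingletonCell_insert hf h₀ (s := 2) (y := 6)
    (by decide) (by decide) (by decide) (by decide)
  have h₂ := hst.isSingletonCell_insert hf h₁ (s := 3) (y := 7)
    (by decide) (by decide) (by decide) (by decide)
  have h₃ := hst.isSingletonCell_insert hf h₂ (s := 4) (y := 8)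
    (by decide) (by decide) (by decide) (by decide)
  have h₄ := hst.isSingletonCell_insert hf h₃ (s := 5) (y := 9)
    (by decide) (by decide) (by decide) (by decide)
  have h₅ := hst.isSingletonCell_insert hf h₄ (s := 6) (y := 0)
    (by decide) (by decide) (by decide) (by decide)
  have h₆ := hst.isSingletonCell_insert hf h₅ (s := 8) (y := 1)
    (by decide) (by decide) (by decide) (by decide)
  exact h₆ x (by revert x; decide)

lemma inr_notMem_ANDouts {n : ℕ} (x : ANDVert (n + 2) ⊕ ANDVert (n + 2)) :
    (.inr x : ANDVert (n + 3)) ∉ ({ANDa0 (n + 3), ANDa1 (n + 3)} : Set _) := by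
  rintro (h | h) <;> cases h

lemma IsAttachedVia.comp_leftEmbedding {n : ℕ} {f : ANDgraph (n + 3) ↪g H}
    (hf : IsAttachedVia ρ f {ANDa0 (n + 3), ANDa1 (n + 3)}) :
    IsAttachedVia ρ (f.comp (ANDgraph.leftEmbedding n)) {ANDa0 (n + 2), ANDa1 (n + 2)} := by
  refine hf.comp _ (fun x _ => inr_notMem_ANDouts _) ?_
  rintro x (t | z | z) hxz hz hx
  · rcases ANDgraph_adj_inl_inrInl.mp hxz.symm with ⟨-, rfl⟩ | ⟨-, rfl⟩
    exacts [absurd (.inl rfl) hx, absurd (.inr rfl) hx]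
  · exact absurd ⟨z, rfl⟩ hz
  · exact absurd hxz not_ANDgraph_adj_inrInl_inrInr

lemma IsAttachedVia.comp_rightEmbedding {n : ℕ} {f : ANDgraph (n + 3) ↪g H}
    (hf : IsAttachedVia ρ f {ANDa0 (n + 3), ANDa1 (n + 3)}) :
    IsAttachedVia ρ (f.comp (ANDgraph.rightEmbedding n)) {ANDa0 (n + 2), ANDa1 (n + 2)} := by
  refine hf.comp _ (fun x _ => inr_notMem_ANDouts _) ?_
  rintro x (t | z | z) hxz hz hx
  · rcases ANDgraph_adj_inl_inrInr.mp hxz.symm with ⟨-, rfl⟩ | ⟨-, rfl⟩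
    exacts [absurd (.inl rfl) hx, absurd (.inr rfl) hx]
  · exact absurd hxz.symm not_ANDgraph_adj_inrInl_inrInr
  · exact absurd ⟨z, rfl⟩ hz

lemma IsAttachedVia.comp_topEmbedding {n : ℕ} {f : ANDgraph (n + 3) ↪g H}
    (hf : IsAttachedVia ρ f {ANDa0 (n + 3), ANDa1 (n + 3)})
    (hsub : ∀ z, z ∉ Set.range Sum.inl → IsSingletonCell ρ (f z)) :
    IsAttachedVia ρ (f.comp (ANDgraph.topEmbedding n)) {ANDa0 2, ANDa1 2} :=
  hf.comp _ (fun _ hx h => hx (h.imp Sum.inl.inj Sum.inl.inj)) fun _ z _ hz _ => hsub z hz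

/-- Each in-terminal of the top copy of `AND₂` is the only top neighbour of an out-terminal of a
sub-gadget. -/
lemma IsStable.isSingletonCell_inl_ANDb (hst : IsStable H ρ) {n : ℕ} {f : ANDgraph (n + 3) ↪g H}
    (hf : IsAttachedVia ρ f {ANDa0 (n + 3), ANDa1 (n + 3)})
    (hsub : ∀ z, z ∉ Set.range Sum.inl → IsSingletonCell ρ (f z)) :
    ∀ i < 4, IsSingletonCell ρ (f (.inl (ANDb 2 i))) := by
  have hT : ∀ (t : Fin 10) (a : ANDVert (n + 2) ⊕ ANDVert (n + 2)),
      (ANDgraph (n + 3)).Adj (.inl t) (.inr a) →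
      (∀ t', (ANDgraph (n + 3)).Adj (.inl t') (.inr a) → t' = t) →
      IsSingletonCell ρ (f (.inl t)) := by
    intro t a hta huniq
    refine hst.isSingletonCell_insert hf (K := {z | z ∉ Set.range Sum.inl}) hsub
      (fun ⟨_, h⟩ => by cases h) (inr_notMem_ANDouts a) hta ?_ _ (Set.mem_insert _ _)
    rintro (t' | z) hz
    exacts [.inl (congrArg _ (huniq t' hz)), .inr (.inl fun ⟨_, h⟩ => by cases h)]
  have hne := ANDa0_ne_ANDa1 (n + 2)
  intro i hi
  interval_cases i
  · refine hT 2 (.inl (ANDa0 (n + 2))) (ANDgraph_adj_inl_inrInl.mpr (.inl ⟨rfl, rfl⟩)) ?_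
    intro t' h
    rcases ANDgraph_adj_inl_inrInl.mp h with ⟨rfl, -⟩ | ⟨-, h⟩
    exacts [rfl, absurd h hne]
  · refine hT 3 (.inl (ANDa1 (n + 2))) (ANDgraph_adj_inl_inrInl.mpr (.inr ⟨rfl, rfl⟩)) ?_
    intro t' h
    rcases ANDgraph_adj_inl_inrInl.mp h with ⟨-, h⟩ | ⟨rfl, -⟩
    exacts [absurd h.symm hne, rfl]
  · refine hT 4 (.inr (ANDa0 (n + 2))) (ANDgraph_adj_inl_inrInr.mpr (.inl ⟨rfl, rfl⟩)) ?_
    intro t' h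
    rcases ANDgraph_adj_inl_inrInr.mp h with ⟨rfl, -⟩ | ⟨-, h⟩
    exacts [rfl, absurd h hne]
  · refine hT 5 (.inr (ANDa1 (n + 2))) (ANDgraph_adj_inl_inrInr.mpr (.inr ⟨rfl, rfl⟩)) ?_
    intro t' h
    rcases ANDgraph_adj_inl_inrInr.mp h with ⟨-, h⟩ | ⟨rfl, -⟩
    exacts [absurd h.symm hne, rfl]

/-- The sub-gadgets are individualised first, then the top copy of `AND₂`. -/
theorem IsStable.isSingletonCell_of_ANDb (hst : IsStable H ρ) :
    ∀ (ℓ : ℕ) (f : ANDgraph ℓ ↪g H), 1 ≤ ℓ → IsAttachedVia ρ f {ANDa0 ℓ, ANDa1 ℓ} →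
      (∀ i < 2 ^ ℓ, IsSingletonCell ρ (f (ANDb ℓ i))) → ∀ x, IsSingletonCell ρ (f x)
  | 1, _, _, hf, hb => hst.isSingletonCell_AND1 hf hb
  | 2, _, _, hf, hb => hst.isSingletonCell_AND2 hf hb
  | n + 3, f, _, hf, hb => by
      have hpow : 2 ^ (n + 3) = 2 * 2 ^ (n + 2) := by ring
      have hL : ∀ x, IsSingletonCell ρ (f (.inr (.inl x))) :=
        hst.isSingletonCell_of_ANDb (n + 2) _ (by omega) hf.comp_leftEmbedding fun i hi => by
          have := hb i (by omega)
          rwa [ANDb_add_three_of_lt hi] at this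
      have hR : ∀ x, IsSingletonCell ρ (f (.inr (.inr x))) :=
        hst.isSingletonCell_of_ANDb (n + 2) _ (by omega) hf.comp_rightEmbedding fun i hi => by
          have := hb (2 ^ (n + 2) + i) (by omega)
          rwa [ANDb_add_three_add] at this
      have hsub : ∀ z : ANDVert (n + 3), z ∉ Set.range Sum.inl → IsSingletonCell ρ (f z) := by
        rintro (t | x | x) hz
        exacts [absurd ⟨t, rfl⟩ hz, hL x, hR x]
      have hTop := hst.isSingletonCell_of_ANDb 2 _ (by omega) (hf.comp_topEmbedding hsub)
        (hst.isSingletonCell_inl_ANDb hf hsub)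
      rintro (x | x | x)
      exacts [hTop x, hL x, hR x]

end Individualisation

/-- Let `ℓ ≥ 1`, let `ψ` be a partition of the in-terminals of `AND_ℓ`
into binary blocks and let `ρ` be the coarsest stable partition of the gadget refining
`ψ`.  Then `ρ` agrees with `ψ` on the in-terminals, and `ρ` distinguishes the
out-terminals `a₀, a₁` iff `ψ` distinguishes every in-terminal pair `(b_{2p}, b_{2p+1})`. -/
theorem AND_gadget_key (ℓ : ℕ) (hℓ : 1 ≤ ℓ) (ψ : Set (Set (ANDVert ℓ)))
    (hψ : IsBinBlockPartition ℓ ψ) (ρ : Setoid (ANDVert ℓ))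
    (hρ : IsCoarsestStableRefining (ANDgraph ℓ) ψ ρ) :
    AgreesWith ρ ψ ∧
    (¬ ρ.r (ANDa0 ℓ) (ANDa1 ℓ) ↔
      ∀ p < 2 ^ (ℓ - 1), ¬ ∃ C ∈ ψ, ANDb ℓ (2 * p) ∈ C ∧ ANDb ℓ (2 * p + 1) ∈ C) := by
  refine ⟨hρ.agreesWith hψ,
    fun h p hp ⟨C, hC, h₀, h₁⟩ => h (hρ.rel_ANDa0_ANDa1 hψ hℓ hp hC h₀ h₁), fun hsplit h => ?_⟩
  have hsing := hρ.1.isSingletonCell_of_ANDb ℓ .refl hℓ (isAttachedVia_refl _)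
    fun i hi => isSingletonCell_ANDb_of_splits_pairs hρ.2.1 hψ hsplit hi
  exact ANDa0_ne_ANDa1 ℓ (hsing (ANDa0 ℓ) _ (ρ.symm' h)).symm
end

section
/- There is a constant c > 0 such that for every integer k ≥ 2 there exists a finite transition system S_k with at most c·2^k·k states, at most c·2^k·k² edges, and a constant labelling function, such that bcost(α) ≥ 2^{k−1}·k³, where α is the unit partition of the state set. In particular bcost(α) ∈ Ω((m+n)·log n), where n and m are the numbers of states and edges of S_k. -/
/-- The partition `π` (together with the label partition it refines) yields a
bisimulation on the transition system with edge relation `E` and labelling `lab`: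
`π`-equivalent states have equal labels and, for every cell, either both or neither
have an out-neighbour in that cell. -/
def BStable {V L : Type*} (E : V → V → Prop) (lab : V → L) (π : Setoid V) : Prop :=
  ∀ u v, π.r u v → lab u = lab v ∧
    ∀ w, ((∃ x, E u x ∧ π.r x w) ↔ (∃ x, E v x ∧ π.r x w))

/-- `π'` is obtained from `π` by the bisimulation refining operation `(R,S)` (for
`π`-closed `R`, `S`): cells disjoint from `S` are unchanged, and two vertices of `S`
stay in a common cell iff they were `π`-equivalent and, for every cell of `π` contained
in `R`, either both or neither have an out-neighbour in that cell. -/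
def IsBRefineOp {V : Type*} (E : V → V → Prop) (π : Setoid V) (R S : Set V)
    (π' : Setoid V) : Prop :=
  Closed π R ∧ Closed π S ∧
    ∀ u v, π'.r u v ↔
      (π.r u v ∧ (u ∈ S → ∀ w ∈ R,
        ((∃ x, E u x ∧ π.r x w) ↔ (∃ x, E v x ∧ π.r x w))))

/-- The cost of the bisimulation refining operation `(R,S)`: the number of edges from
`S` to `R`. -/
noncomputable def bOpCost {V : Type*} (E : V → V → Prop) (R S : Set V) : ℕ :=
  {p : V × V | E p.1 p.2 ∧ p.1 ∈ S ∧ p.2 ∈ R}.ncard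

/-- `BCostReach E lab π c` holds iff some sequence of effective bisimulation refining
operations starting from `π` and ending in a partition inducing a bisimulation has
total cost `c`. -/
inductive BCostReach {V L : Type*} (E : V → V → Prop) (lab : V → L) :
    Setoid V → ℕ → Prop
  | stable {π : Setoid V} (h : BStable E lab π) : BCostReach E lab π 0
  | step {π π' : Setoid V} {R S : Set V} {c : ℕ} (hop : IsBRefineOp E π R S π')
      (heff : π' ≠ π) (htail : BCostReach E lab π' c) :
      BCostReach E lab π (bOpCost E R S + c)

/-- `bcost`: the minimum total cost of a sequence of effective bisimulation refining
operations transforming `π` into a partition that induces a bisimulation. -/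
noncomputable def bcost {V L : Type*} (E : V → V → Prop) (lab : V → L)
    (π : Setoid V) : ℕ :=
  sInf {c : ℕ | BCostReach E lab π c}

def HasEdgeToCell {V : Type*} (E : V → V → Prop) (π : Setoid V) (u w : V) : Prop :=
  ∃ x, E u x ∧ π.r x w

lemma ncard_setOf_le_sq {n : ℕ} (E : Fin n → Fin n → Prop) :
    {p : Fin n × Fin n | E p.1 p.2}.ncard ≤ n ^ 2 :=
  (Set.ncard_le_card _).trans_eq (by simp [sq])

lemma ncard_pairs_across {n A B : ℕ} (hB : B ≤ n) :
    {p : Fin n × Fin n | (p.1 : ℕ) < A ∧ A ≤ (p.2 : ℕ) ∧ (p.2 : ℕ) < B}.ncard =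
      A * (B - A) := by
  have hinj : Function.Injective (Prod.map Fin.val Fin.val : Fin n × Fin n → ℕ × ℕ) :=
    Fin.val_injective.prodMap Fin.val_injective
  rw [← Set.ncard_image_of_injective _ hinj]
  have himage : Prod.map Fin.val Fin.val ''
      {p : Fin n × Fin n | (p.1 : ℕ) < A ∧ A ≤ (p.2 : ℕ) ∧ (p.2 : ℕ) < B} =
      ↑(Finset.range A ×ˢ Finset.Ico A B) := by
    ext ⟨a, b⟩
    simp only [Set.mem_image, Set.mem_ofPred_eq, Prod.exists, Prod.map, Prod.mk.injEq,
      Finset.coe_product, Finset.coe_range, Finset.coe_Ico, Set.mem_prod, Set.mem_Iio,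
      Set.mem_Ico]
    constructor
    · rintro ⟨x, y, ⟨hx, hy⟩, rfl, rfl⟩
      exact ⟨hx, hy⟩
    · rintro ⟨ha, hb⟩
      exact ⟨⟨a, by omega⟩, ⟨b, by omega⟩, ⟨ha, hb⟩, rfl, rfl⟩
  rw [himage, Set.ncard_coe_finset, Finset.card_product, Finset.card_range, Nat.card_Ico]

lemma cube_le_three_mul_sum_sq (k : ℕ) : k ^ 3 ≤ 3 * ∑ i ∈ Finset.range k, (i + 1) ^ 2 := by
  induction k with
  | zero => simp
  | succ k ih =>
    rw [Finset.sum_range_succ]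
    linarith [show (k + 1) ^ 3 = k ^ 3 + 3 * k ^ 2 + 3 * k + 1 by ring,
      show (k + 1) ^ 2 = k ^ 2 + 2 * k + 1 by ring]

lemma sq_le_four_mul_half_mul (j : ℕ) : j ^ 2 ≤ 4 * ((j + 1) / 2 * (j + 1 - (j + 1) / 2)) := by
  rcases Nat.even_or_odd' j with ⟨m, rfl | rfl⟩
  · rw [show (2 * m + 1) / 2 = m by omega, show 2 * m + 1 - m = m + 1 by omega]
    nlinarith
  · rw [show (2 * m + 1 + 1) / 2 = m + 1 by omega,
      show 2 * m + 1 + 1 - (m + 1) = m + 1 by omega]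
    nlinarith

namespace Layered

def layer (s : ℕ) {n : ℕ} (v : Fin n) : ℕ := v / s

def edge (s : ℕ) {n : ℕ} (u v : Fin n) : Prop := layer s u < layer s v

def layersMergedUpTo (s j : ℕ) {n : ℕ} : Setoid (Fin n) where
  r u v := layer s u = layer s v ∨ (layer s u ≤ j ∧ layer s v ≤ j)
  iseqv := ⟨fun _ => Or.inl rfl, fun h => by omega, fun h h' => by omega⟩

def layersUpTo (s j : ℕ) {n : ℕ} : Set (Fin n) := {v | layer s v ≤ j}

variable {k s j : ℕ} {L : Type*}

lemma layersMergedUpTo_r_iff {n : ℕ} {u v : Fin n} :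
    (layersMergedUpTo s j).r u v ↔
      layer s u = layer s v ∨ (layer s u ≤ j ∧ layer s v ≤ j) :=
  Iff.rfl

lemma layer_le (v : Fin ((k + 1) * s)) : layer s v ≤ k := by
  have hs : 0 < s := Nat.pos_of_mul_pos_left (Nat.zero_lt_of_lt v.2)
  exact Nat.lt_succ_iff.mp ((Nat.div_lt_iff_lt_mul hs).mpr v.2)

lemma exists_layer_eq (hs : 0 < s) {t : ℕ} (ht : t ≤ k) :
    ∃ v : Fin ((k + 1) * s), layer s v = t :=
  ⟨⟨t * s, Nat.mul_lt_mul_of_pos_right (by omega) hs⟩, Nat.mul_div_cancel t hs⟩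

lemma layersMergedUpTo_top : layersMergedUpTo s k = (⊤ : Setoid (Fin ((k + 1) * s))) :=
  eq_top_iff.mpr fun u v _ => Or.inr ⟨layer_le u, layer_le v⟩

lemma layersMergedUpTo_pred_iff {n : ℕ} {u v : Fin n} :
    (layersMergedUpTo s (j - 1)).r u v ↔
      (layersMergedUpTo s j).r u v ∧ (layer s u < j ↔ layer s v < j) := by
  simp only [layersMergedUpTo_r_iff]
  omega

lemma layersMergedUpTo_pred_ne (hs : 0 < s) (hj : 1 ≤ j) (hjk : j ≤ k) :
    layersMergedUpTo s (j - 1) ≠ (layersMergedUpTo s j : Setoid (Fin ((k + 1) * s))) := by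
  intro he
  obtain ⟨u, hu⟩ := exists_layer_eq hs hjk
  obtain ⟨v, hv⟩ := exists_layer_eq hs (Nat.zero_le k)
  have huv : (layersMergedUpTo s j).r u v := Or.inr ⟨hu.le, by omega⟩
  rw [← he, layersMergedUpTo_pred_iff] at huv
  omega

lemma layersUpTo_subset_of_mem {n : ℕ} {S : Set (Fin n)} (hS : Closed (layersMergedUpTo s j) S)
    {x : Fin n} (hx : layer s x ≤ j) (hxS : x ∈ S) : layersUpTo s j ⊆ S :=
  fun y hy => (hS x y (Or.inr ⟨hx, hy⟩)).mp hxS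

lemma hasEdgeToCell_congr {n : ℕ} {π : Setoid (Fin n)} {u u' : Fin n}
    (h : layer s u = layer s u') (w : Fin n) :
    HasEdgeToCell (edge s) π u w ↔ HasEdgeToCell (edge s) π u' w := by
  simp only [HasEdgeToCell, edge, h]

lemma hasEdgeToCell_iff_of_le (hs : 0 < s) (hjk : j ≤ k) {u w : Fin ((k + 1) * s)}
    (hw : layer s w ≤ j) :
    HasEdgeToCell (edge s) (layersMergedUpTo s j) u w ↔ layer s u < j := by
  constructor
  · rintro ⟨x, hx, hxw | hxw⟩ <;> (unfold edge at hx; omega)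
  · intro hu
    obtain ⟨x, hx⟩ := exists_layer_eq hs hjk
    exact ⟨x, by unfold edge; omega, Or.inr ⟨hx.le, hw⟩⟩

lemma hasEdgeToCell_iff_of_lt {n : ℕ} {u w : Fin n} (hw : j < layer s w) :
    HasEdgeToCell (edge s) (layersMergedUpTo s j) u w ↔ layer s u < layer s w := by
  constructor
  · rintro ⟨x, hx, hxw | hxw⟩ <;> (unfold edge at hx; omega)
  · exact fun hu => ⟨w, hu, Or.inl rfl⟩

lemma forall_mem_hasEdgeToCell_iff (hs : 0 < s) (hjk : j ≤ k) {R : Set (Fin ((k + 1) * s))}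
    (hR : Closed (layersMergedUpTo s j) R) {u v : Fin ((k + 1) * s)}
    (hu : layer s u ≤ j) (hv : layer s v ≤ j) :
    (∀ w ∈ R, HasEdgeToCell (edge s) (layersMergedUpTo s j) u w ↔
        HasEdgeToCell (edge s) (layersMergedUpTo s j) v w) ↔
      (layersUpTo s j ⊆ R → (layer s u < j ↔ layer s v < j)) := by
  constructor
  · intro h hlowR
    obtain ⟨w, hw⟩ := exists_layer_eq hs (Nat.zero_le k)
    have hwj : layer s w ≤ j := by omega
    have hwR : w ∈ R := hlowR hwj
    rw [← hasEdgeToCell_iff_of_le hs hjk (u := u) hwj, ← hasEdgeToCell_iff_of_le hs hjk hwj]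
    exact h w hwR
  · intro h w hwR
    rcases le_or_gt (layer s w) j with hw | hw
    · rw [hasEdgeToCell_iff_of_le hs hjk hw, hasEdgeToCell_iff_of_le hs hjk hw]
      exact h (layersUpTo_subset_of_mem hR hw hwR)
    · rw [hasEdgeToCell_iff_of_lt hw, hasEdgeToCell_iff_of_lt hw]
      omega

/-- The splitting condition of the operation `(R, S)` on `layersMergedUpTo s j`: only the merged
cell can split, and only when it lies in both `R` and `S`. -/
lemma isBRefineOp_condition_iff (hs : 0 < s) (hjk : j ≤ k) {R S : Set (Fin ((k + 1) * s))}
    (hR : Closed (layersMergedUpTo s j) R) (hS : Closed (layersMergedUpTo s j) S)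
    {u v : Fin ((k + 1) * s)} :
    ((layersMergedUpTo s j).r u v ∧ (u ∈ S → ∀ w ∈ R,
        (HasEdgeToCell (edge s) (layersMergedUpTo s j) u w ↔
          HasEdgeToCell (edge s) (layersMergedUpTo s j) v w))) ↔
      ((layersMergedUpTo s j).r u v ∧
        (layersUpTo s j ⊆ S → layersUpTo s j ⊆ R → (layer s u < j ↔ layer s v < j))) := by
  refine and_congr_right fun huv => ?_
  rcases huv with he | ⟨hu, hv⟩
  · exact iff_of_true (fun _ w _ => hasEdgeToCell_congr he w) (fun _ _ => by rw [he])
  · rw [forall_mem_hasEdgeToCell_iff hs hjk hR hu hv]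
    exact ⟨fun h hlowS => h (hlowS hu), fun h huS => h (layersUpTo_subset_of_mem hS hu huS)⟩

lemma isBRefineOp_univ_univ (hs : 0 < s) (hjk : j ≤ k) :
    IsBRefineOp (edge s) (layersMergedUpTo s j) Set.univ Set.univ
      (layersMergedUpTo s (j - 1) : Setoid (Fin ((k + 1) * s))) :=
  ⟨fun _ _ _ => Iff.rfl, fun _ _ _ => Iff.rfl, fun _ _ =>
    layersMergedUpTo_pred_iff.trans
      ((isBRefineOp_condition_iff hs hjk (fun _ _ _ => Iff.rfl) (fun _ _ _ => Iff.rfl)).trans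
        (by simp only [Set.subset_univ, forall_const])).symm⟩

lemma isBRefineOp_layersMergedUpTo_of_ne (hs : 0 < s) (hjk : j ≤ k)
    {R S : Set (Fin ((k + 1) * s))} {π' : Setoid (Fin ((k + 1) * s))}
    (hop : IsBRefineOp (edge s) (layersMergedUpTo s j) R S π')
    (hne : π' ≠ layersMergedUpTo s j) :
    1 ≤ j ∧ layersUpTo s j ⊆ S ∧ layersUpTo s j ⊆ R ∧
      π' = layersMergedUpTo s (j - 1) := by
  obtain ⟨hR, hS, hiff⟩ := hop
  have hrel : ∀ u v, π'.r u v ↔ ((layersMergedUpTo s j).r u v ∧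
      (layersUpTo s j ⊆ S → layersUpTo s j ⊆ R → (layer s u < j ↔ layer s v < j))) :=
    fun u v => (hiff u v).trans (isBRefineOp_condition_iff hs hjk hR hS)
  by_cases hlow : layersUpTo s j ⊆ S ∧ layersUpTo s j ⊆ R
  · have hπ' : π' = layersMergedUpTo s (j - 1) :=
      Setoid.ext fun u v => (hrel u v).trans
        (by simp only [hlow, forall_const, layersMergedUpTo_pred_iff])
    refine ⟨?_, hlow.1, hlow.2, hπ'⟩
    by_contra hj
    exact hne (hπ'.trans (by rw [show j - 1 = j by omega]))
  · exact absurd (Setoid.ext fun u v => (hrel u v).trans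
      (and_iff_left fun hS' hR' => absurd ⟨hS', hR'⟩ hlow)) hne

lemma bStable_layersMergedUpTo_zero {n : ℕ} {lab : Fin n → L}
    (hlab : ∀ u v, lab u = lab v) : BStable (edge s) lab (layersMergedUpTo s 0) := by
  intro u v huv
  have he : layer s u = layer s v := by rw [layersMergedUpTo_r_iff] at huv; omega
  exact ⟨hlab u v, hasEdgeToCell_congr he⟩

lemma not_bStable_layersMergedUpTo (lab : Fin ((k + 1) * s) → L) (hs : 0 < s)
    (hj : 1 ≤ j) (hjk : j ≤ k) : ¬ BStable (edge s) lab (layersMergedUpTo s j) := by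
  intro hst
  obtain ⟨u, hu⟩ := exists_layer_eq hs hjk
  obtain ⟨v, hv⟩ := exists_layer_eq hs (Nat.zero_le k)
  have h := (hst v u (Or.inr ⟨by omega, hu.le⟩)).2 u
  change HasEdgeToCell _ _ v u ↔ HasEdgeToCell _ _ u u at h
  rw [hasEdgeToCell_iff_of_le hs hjk hu.le, hasEdgeToCell_iff_of_le hs hjk hu.le] at h
  omega

lemma sq_mul_sq_le_four_mul_bOpCost (hs : 0 < s) (hjk : j ≤ k) {R S : Set (Fin ((k + 1) * s))}
    (hS : layersUpTo s j ⊆ S) (hR : layersUpTo s j ⊆ R) :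
    (j * s) ^ 2 ≤ 4 * bOpCost (edge s) R S := by
  set a := (j + 1) / 2
  have hsub : {p : Fin ((k + 1) * s) × Fin ((k + 1) * s) |
      (p.1 : ℕ) < a * s ∧ a * s ≤ (p.2 : ℕ) ∧ (p.2 : ℕ) < (j + 1) * s} ⊆
      {p | edge s p.1 p.2 ∧ p.1 ∈ S ∧ p.2 ∈ R} := by
    rintro ⟨x, y⟩ ⟨hx, hya, hyj⟩
    have hlx : layer s x < a := (Nat.div_lt_iff_lt_mul hs).mpr hx
    have hly : a ≤ layer s y := (Nat.le_div_iff_mul_le hs).mpr hya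
    have hly' : layer s y ≤ j := Nat.lt_succ_iff.mp ((Nat.div_lt_iff_lt_mul hs).mpr hyj)
    exact ⟨lt_of_lt_of_le hlx hly, hS (show layer s x ≤ j by omega), hR hly'⟩
  have hcard := Set.ncard_le_ncard hsub (Set.toFinite _)
  rw [ncard_pairs_across (Nat.mul_le_mul_right s (by omega))] at hcard
  calc (j * s) ^ 2 = j ^ 2 * (s * s) := by ring
    _ ≤ 4 * (a * (j + 1 - a)) * (s * s) := Nat.mul_le_mul_right _ (sq_le_four_mul_half_mul j)
    _ = 4 * (a * s * ((j + 1) * s - a * s)) := by rw [← Nat.sub_mul]; ring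
    _ ≤ 4 * bOpCost (edge s) R S := Nat.mul_le_mul_left 4 hcard

lemma sq_mul_sum_le_four_mul_of_bCostReach {lab : Fin ((k + 1) * s) → L}
    (hs : 0 < s) {π : Setoid (Fin ((k + 1) * s))} {c : ℕ} (h : BCostReach (edge s) lab π c) :
    ∀ j ≤ k, π = layersMergedUpTo s j →
      s ^ 2 * ∑ i ∈ Finset.range j, (i + 1) ^ 2 ≤ 4 * c := by
  induction h with
  | stable hst =>
    rintro j hjk rfl
    obtain rfl | hj := Nat.eq_zero_or_pos j
    · simp
    · exact absurd hst (not_bStable_layersMergedUpTo lab hs hj hjk)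
  | step hop heff _ ih =>
    rintro j hjk rfl
    obtain ⟨hj, hS, hR, hπ'⟩ := isBRefineOp_layersMergedUpTo_of_ne hs hjk hop heff
    have htail := ih (j - 1) (by omega) hπ'
    have hstep := sq_mul_sq_le_four_mul_bOpCost hs hjk hS hR
    obtain ⟨i, rfl⟩ : ∃ i, j = i + 1 := ⟨j - 1, by omega⟩
    rw [Nat.add_sub_cancel] at htail
    rw [mul_pow] at hstep
    rw [Finset.sum_range_succ, mul_add]
    linarith

lemma exists_bCostReach_layersMergedUpTo {lab : Fin ((k + 1) * s) → L}
    (hlab : ∀ u v, lab u = lab v) (hs : 0 < s) :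
    ∀ j ≤ k, ∃ c, BCostReach (edge s) lab (layersMergedUpTo s j) c := by
  intro j
  induction j with
  | zero => exact fun _ => ⟨0, .stable (bStable_layersMergedUpTo_zero hlab)⟩
  | succ j ih =>
    intro hjk
    obtain ⟨c, hc⟩ := ih (by omega)
    exact ⟨_, .step (isBRefineOp_univ_univ hs hjk)
      (layersMergedUpTo_pred_ne hs (by omega) hjk) hc⟩

lemma sq_mul_sum_le_four_mul_bcost {lab : Fin ((k + 1) * s) → L}
    (hlab : ∀ u v, lab u = lab v) (hs : 0 < s) :
    s ^ 2 * ∑ i ∈ Finset.range k, (i + 1) ^ 2 ≤ 4 * bcost (edge s) lab ⊤ := by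
  obtain ⟨c, hc⟩ := exists_bCostReach_layersMergedUpTo hlab hs k le_rfl
  rw [layersMergedUpTo_top] at hc
  exact sq_mul_sum_le_four_mul_of_bCostReach hs (Nat.sInf_mem ⟨c, hc⟩) k le_rfl
    layersMergedUpTo_top.symm

end Layered

/-- Layers of size `≈ 2^(k/2)`, so that the `k + 1` layers span `Θ(2^k k²)` edges. -/
def blockSize (k : ℕ) : ℕ := 2 ^ ((k + 1) / 2 + 2)

lemma blockSize_le (k : ℕ) : blockSize k ≤ 4 * 2 ^ k := by
  calc blockSize k ≤ 2 ^ (k + 2) := Nat.pow_le_pow_right (by norm_num) (by omega)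
    _ = 4 * 2 ^ k := by ring

lemma two_pow_le_blockSize_sq (k : ℕ) : 2 ^ (k + 4) ≤ blockSize k ^ 2 := by
  rw [blockSize, ← pow_mul]
  exact Nat.pow_le_pow_right (by norm_num) (by omega)

lemma blockSize_sq_le (k : ℕ) : blockSize k ^ 2 ≤ 32 * 2 ^ k := by
  rw [blockSize, ← pow_mul, show 32 * 2 ^ k = 2 ^ (k + 5) by ring]
  exact Nat.pow_le_pow_right (by norm_num) (by omega)

lemma two_pow_mul_cube_le_bcost {k : ℕ} (hk : 1 ≤ k) :
    2 ^ (k - 1) * k ^ 3 ≤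
      bcost (Layered.edge (blockSize k)) (fun _ : Fin ((k + 1) * blockSize k) => 0) ⊤ := by
  have hbcost := Layered.sq_mul_sum_le_four_mul_bcost
    (lab := fun _ : Fin ((k + 1) * blockSize k) => 0) (fun _ _ => rfl) (by simp [blockSize])
  have hpow : 2 ^ (k + 4) = 32 * 2 ^ (k - 1) := by
    rw [show 32 * 2 ^ (k - 1) = 2 ^ (k - 1 + 5) by ring]
    congr 1
    omega
  have h32 : 32 * (2 ^ (k - 1) * k ^ 3) ≤
      12 * bcost (Layered.edge (blockSize k)) (fun _ : Fin ((k + 1) * blockSize k) => 0) ⊤ :=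
    calc 32 * (2 ^ (k - 1) * k ^ 3) = 2 ^ (k + 4) * k ^ 3 := by rw [hpow]; ring
      _ ≤ blockSize k ^ 2 * (3 * ∑ i ∈ Finset.range k, (i + 1) ^ 2) :=
        Nat.mul_le_mul (two_pow_le_blockSize_sq k) (cube_le_three_mul_sum_sq k)
      _ ≤ 12 * bcost (Layered.edge (blockSize k)) (fun _ => 0) ⊤ := by linarith
  omega

lemma succ_mul_blockSize_le {k : ℕ} (hk : 1 ≤ k) : (k + 1) * blockSize k ≤ 8 * 2 ^ k * k :=
  calc (k + 1) * blockSize k ≤ (2 * k) * (4 * 2 ^ k) :=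
        Nat.mul_le_mul (by omega) (blockSize_le k)
    _ = 8 * 2 ^ k * k := by ring

lemma succ_mul_blockSize_sq_le {k : ℕ} (hk : 1 ≤ k) :
    ((k + 1) * blockSize k) ^ 2 ≤ 128 * 2 ^ k * k ^ 2 :=
  calc ((k + 1) * blockSize k) ^ 2 = (k + 1) ^ 2 * blockSize k ^ 2 := mul_pow _ _ _
    _ ≤ (2 * k) ^ 2 * (32 * 2 ^ k) :=
        Nat.mul_le_mul (Nat.pow_le_pow_left (by omega) 2) (blockSize_sq_le k)
    _ = 128 * 2 ^ k * k ^ 2 := by ring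

lemma log_succ_mul_blockSize_le {k : ℕ} (hk : 1 ≤ k) :
    Nat.log 2 ((k + 1) * blockSize k) ≤ 2 * k + 3 := by
  have hcard : (k + 1) * blockSize k ≤ 2 ^ (2 * k + 3) :=
    calc (k + 1) * blockSize k ≤ 8 * 2 ^ k * k := succ_mul_blockSize_le hk
      _ ≤ 8 * 2 ^ k * 2 ^ k := Nat.mul_le_mul_left _ Nat.lt_two_pow_self.le
      _ = 2 ^ (2 * k + 3) := by ring
  calc Nat.log 2 ((k + 1) * blockSize k) ≤ Nat.log 2 (2 ^ (2 * k + 3)) :=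
        Nat.log_mono_right hcard
    _ = 2 * k + 3 := Nat.log_pow (by norm_num) _

/-- There is a constant `c > 0` such that for every `k ≥ 2` there is a
finite transition system with a constant labelling, at most `c·2^k·k` states and at most
`c·2^k·k²` edges, on which the unit partition `α = ⊤` has `bcost(α) ≥ 2^{k-1}·k³`; in
particular `bcost(α) ∈ Ω((m+n)·log n)` on these systems. -/
theorem bcost_lower_bound : ∃ c : ℕ, 0 < c ∧ ∀ k : ℕ, 2 ≤ k →
    ∃ (n : ℕ) (E : Fin n → Fin n → Prop) (lab : Fin n → ℕ),
      (∀ u v, lab u = lab v) ∧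
      n ≤ c * 2 ^ k * k ∧
      {p : Fin n × Fin n | E p.1 p.2}.ncard ≤ c * 2 ^ k * k ^ 2 ∧
      2 ^ (k - 1) * k ^ 3 ≤ bcost E lab ⊤ ∧
      (n + {p : Fin n × Fin n | E p.1 p.2}.ncard) * Nat.log 2 n ≤ c * bcost E lab ⊤ := by
  refine ⟨1088, by norm_num, fun k hk => ?_⟩
  have hbcost := two_pow_mul_cube_le_bcost (k := k) (by omega)
  have hn := succ_mul_blockSize_le (k := k) (by omega)
  have hm := (ncard_setOf_le_sq (Layered.edge (blockSize k))).trans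
    (succ_mul_blockSize_sq_le (k := k) (by omega))
  have hlog := log_succ_mul_blockSize_le (k := k) (by omega)
  have hpow : 2 ^ k = 2 * 2 ^ (k - 1) := by
    rw [← pow_succ']
    congr 1
    omega
  refine ⟨_, Layered.edge (blockSize k), fun _ => 0, fun _ _ => rfl,
    hn.trans (by gcongr; norm_num), hm.trans (by gcongr; norm_num), hbcost, ?_⟩
  calc ((k + 1) * blockSize k + {p : Fin _ × Fin _ | Layered.edge (blockSize k) p.1 p.2}.ncard) *
        Nat.log 2 ((k + 1) * blockSize k)
      ≤ (8 * 2 ^ k * k ^ 2 + 128 * 2 ^ k * k ^ 2) * (4 * k) :=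
        Nat.mul_le_mul (Nat.add_le_add (hn.trans (by gcongr; nlinarith)) hm) (by omega)
    _ = 1088 * (2 ^ (k - 1) * k ^ 3) := by rw [hpow]; ring
    _ ≤ 1088 * bcost (Layered.edge (blockSize k)) (fun _ => 0) ⊤ := by gcongr
end

section
/- Let G = (V,E,c) be a finite edge-coloured directed multigraph with edge colours in {1,…,p}, and let G' be the digraph with vertex set V ∪ {v_e : e ∈ E} that has, for each edge e = (u,v) ∈ E, the edges (u, v_e) and (v_e, v); let α be the vertex colouring of G' given by α(v_e) = c(e) for e ∈ E and α(w) = 0 for w ∈ V. Then a vertex colouring β of V is edge-colour stable for G if and only if there exists a stable colouring β' of G' whose partition refines π_α and whose restriction to V induces the same partition of V as β. -/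
/-!
Subdividing every edge `e` by a vertex `v_e` turns "edges of colour `j` from `u` into the
class `C`" into "out-neighbours of `u` of a given colour": in the forward direction colour
`v_e` by the pair `(c e, β (tgt e))`; conversely, in a stable colouring `β'` of `G'` the colour
of `v_e` determines `c e` (as `β'` refines `π_α`) and the class of `tgt e` (the unique
out-neighbour of `v_e`). In both directions the count of edges in question is then a sum,
over the fibres of the colouring of the subdivision vertices, of counts that agree.
-/

/-- The adjacency relation of the digraph `G'` obtained from the edge-coloured
multigraph with edge set `E` (with source and target maps `src`, `tgt`): its vertices
are `V ⊕ E`, and each edge `e` gives rise to the two arcs `(src e, v_e)`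
and `(v_e, tgt e)`. -/
def auxAdj {V E : Type*} (src tgt : E → V) : (V ⊕ E) → (V ⊕ E) → Prop := fun a b =>
  (∃ e, a = Sum.inl (src e) ∧ b = Sum.inr e) ∨
  (∃ e, a = Sum.inr e ∧ b = Sum.inl (tgt e))

/-- The initial colouring `α` on `V ⊕ E`: original vertices get colour `0`, and the new
vertex `v_e` gets the colour `c e` of the edge `e`. -/
def auxColouring {V E : Type*} (c : E → ℕ) : (V ⊕ E) → ℕ
  | Sum.inl _ => 0
  | Sum.inr e => c e

/-- `d⁺_j(u, C)`: the number of edges of colour `j` leaving `u` whose head lies in `C`. -/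
noncomputable def colOutDeg {V E : Type*} (src tgt : E → V) (c : E → ℕ) (j : ℕ)
    (u : V) (C : Set V) : ℕ :=
  {e : E | src e = u ∧ c e = j ∧ tgt e ∈ C}.ncard

/-- `β` is an edge-colour stable vertex colouring of the `p`-edge-coloured multigraph:
vertices of equal colour have, for each edge colour `j ∈ {1,…,p}` and each colour class
`C` of `β`, the same number of `j`-coloured edges into `C`. -/
def EdgeColourStable {V E : Type*} (p : ℕ) (src tgt : E → V) (c : E → ℕ)
    (β : V → ℕ) : Prop :=
  ∀ u v, β u = β v → ∀ j, 1 ≤ j → j ≤ p → ∀ i,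
    colOutDeg src tgt c j u {x | β x = i} = colOutDeg src tgt c j v {x | β x = i}

/-- `γ` is a stable colouring of the digraph with adjacency relation `adj`: vertices of
equal colour have the same number of out-neighbours in every colour class. -/
def StableDigraphColouring {W : Type*} (adj : W → W → Prop) (γ : W → ℕ) : Prop :=
  ∀ a b, γ a = γ b → ∀ i,
    {x | adj a x ∧ γ x = i}.ncard = {x | adj b x ∧ γ x = i}.ncard

open Finset in
lemma Set.ncard_inter_eq_of_ncard_inter_fiber_eq {α ι : Type*} [Finite α] {s t P : Set α}
    (f : α → ι) (hP : ∀ a b, f a = f b → a ∈ P → b ∈ P)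
    (h : ∀ k, (s ∩ f ⁻¹' {k}).ncard = (t ∩ f ⁻¹' {k}).ncard) :
    (s ∩ P).ncard = (t ∩ P).ncard := by
  classical
  have := Fintype.ofFinite α
  have hsum (r : Set α) :
      (r ∩ P).ncard = ∑ k ∈ P.toFinset.image f, (r ∩ f ⁻¹' {k}).ncard := by
    rw [Set.ncard_eq_toFinset_card',
      card_eq_sum_card_fiberwise (f := f) (t := P.toFinset.image f)]
    · refine sum_congr rfl fun k hk => ?_
      obtain ⟨b, hb, rfl⟩ := Finset.mem_image.mp hk
      have hfiber : ∀ a, f a = f b → a ∈ P := fun a hab => hP b a hab.symm (by simpa using hb)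
      rw [Set.ncard_eq_toFinset_card']
      congr 1
      ext a
      simp only [mem_filter, Set.mem_toFinset, Set.mem_inter_iff, Set.mem_preimage,
        Set.mem_singleton_iff]
      exact ⟨fun h => ⟨h.1.1, h.2⟩, fun h => ⟨⟨h.1, hfiber a h.2⟩, h.2⟩⟩
    · intro a ha
      simp only [coe_image, Set.coe_toFinset] at ha ⊢
      exact Set.mem_image_of_mem f ha.2
  rw [hsum s, hsum t]
  exact sum_congr rfl fun k _ => h k

section AuxDigraph

variable {V E : Type*} {src tgt : E → V}

lemma ncard_auxAdj_inl (γ : V ⊕ E → ℕ) (u : V) (i : ℕ) :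
    {x | auxAdj src tgt (Sum.inl u) x ∧ γ x = i}.ncard =
      {e | src e = u ∧ γ (Sum.inr e) = i}.ncard := by
  have hset : {x | auxAdj src tgt (Sum.inl u) x ∧ γ x = i} =
      Sum.inr '' {e | src e = u ∧ γ (Sum.inr e) = i} := by
    ext x
    simp only [auxAdj, Set.mem_ofPred_eq, Set.mem_image]
    constructor
    · rintro ⟨⟨e, he, rfl⟩ | ⟨e, he, -⟩, hx⟩
      · exact ⟨e, ⟨(Sum.inl_injective he).symm, hx⟩, rfl⟩
      · exact absurd he Sum.inl_ne_inr
    · rintro ⟨e, ⟨rfl, he⟩, rfl⟩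
      exact ⟨Or.inl ⟨e, rfl, rfl⟩, he⟩
  rw [hset, Set.ncard_image_of_injective _ Sum.inr_injective]

lemma ncard_auxAdj_inr (γ : V ⊕ E → ℕ) (e : E) (i : ℕ) :
    {x | auxAdj src tgt (Sum.inr e) x ∧ γ x = i}.ncard =
      if γ (Sum.inl (tgt e)) = i then 1 else 0 := by
  have hset : {x | auxAdj src tgt (Sum.inr e) x ∧ γ x = i} =
      {x | x = Sum.inl (tgt e) ∧ γ x = i} := by
    ext x
    simp only [auxAdj, Set.mem_ofPred_eq]
    constructor
    · rintro ⟨⟨e', he, -⟩ | ⟨e', he, rfl⟩, hx⟩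
      · exact absurd he.symm Sum.inl_ne_inr
      · obtain rfl := Sum.inr_injective he
        exact ⟨rfl, hx⟩
    · rintro ⟨rfl, hx⟩
      exact ⟨Or.inr ⟨e, rfl, rfl⟩, hx⟩
  rw [hset]
  split_ifs with h
  · rw [show {x | x = Sum.inl (tgt e) ∧ γ x = i} = {Sum.inl (tgt e)} from
      Set.ext fun x => ⟨fun hx => hx.1, fun hx => ⟨hx, hx ▸ h⟩⟩, Set.ncard_singleton]
  · rw [Set.eq_empty_of_forall_notMem (s := {x | x = Sum.inl (tgt e) ∧ γ x = i})
      fun x ⟨hx, hγ⟩ => h (hx ▸ hγ), Set.ncard_empty]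

lemma StableDigraphColouring.eq_inl_tgt_of_eq_inr {γ : V ⊕ E → ℕ}
    (hγ : StableDigraphColouring (auxAdj src tgt) γ) {e e' : E}
    (h : γ (Sum.inr e) = γ (Sum.inr e')) :
    γ (Sum.inl (tgt e)) = γ (Sum.inl (tgt e')) := by
  have hcount := hγ _ _ h (γ (Sum.inl (tgt e)))
  rw [ncard_auxAdj_inr, ncard_auxAdj_inr, if_pos rfl] at hcount
  split_ifs at hcount with h'
  exact h'.symm

end AuxDigraph

section EdgeColoured

variable {V E : Type*} {p : ℕ} {src tgt : E → V} {c : E → ℕ} {β : V → ℕ}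

/-- For `j` outside `1, …, p` both counts vanish. -/
lemma EdgeColourStable.colOutDeg_eq (hc : ∀ e, 1 ≤ c e ∧ c e ≤ p)
    (hβ : EdgeColourStable p src tgt c β) {u v : V} (huv : β u = β v) (j i : ℕ) :
    colOutDeg src tgt c j u {x | β x = i} = colOutDeg src tgt c j v {x | β x = i} := by
  by_cases hj : 1 ≤ j ∧ j ≤ p
  · exact hβ u v huv j hj.1 hj.2 i
  · have hempty (w : V) : {e | src e = w ∧ c e = j ∧ tgt e ∈ {x | β x = i}} = ∅ :=
      Set.eq_empty_of_forall_notMem fun e ⟨_, hce, _⟩ => hj (hce ▸ hc e)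
    simp only [colOutDeg, hempty]

def subdivisionColouring (tgt : E → V) (c : E → ℕ) (β : V → ℕ) : V ⊕ E → ℕ :=
  fun x => Encodable.encode (Sum.map β (fun e => (c e, β (tgt e))) x)

lemma subdivisionColouring_eq_iff {a b : V ⊕ E} :
    subdivisionColouring tgt c β a = subdivisionColouring tgt c β b ↔
      Sum.map β (fun e => (c e, β (tgt e))) a = Sum.map β (fun e => (c e, β (tgt e))) b :=
  Encodable.encode_inj

lemma EdgeColourStable.stableDigraphColouring_subdivisionColouring [Finite E]
    (hc : ∀ e, 1 ≤ c e ∧ c e ≤ p) (hβ : EdgeColourStable p src tgt c β) :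
    StableDigraphColouring (auxAdj src tgt) (subdivisionColouring tgt c β) := by
  intro a b hab i
  rw [subdivisionColouring_eq_iff] at hab
  rcases a with u | e <;> rcases b with v | e'
  · rw [ncard_auxAdj_inl, ncard_auxAdj_inl]
    refine Set.ncard_inter_eq_of_ncard_inter_fiber_eq (s := {e | src e = u})
      (t := {e | src e = v}) (fun e => (c e, β (tgt e))) (fun e e' hee' he => ?_)
      fun ⟨j, l⟩ => ?_
    · rw [← he]
      exact subdivisionColouring_eq_iff.mpr (congrArg Sum.inr hee'.symm)
    · have hfiber (w : V) : {e | src e = w} ∩ (fun e => (c e, β (tgt e))) ⁻¹' {(j, l)} =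
          {e | src e = w ∧ c e = j ∧ tgt e ∈ {x | β x = l}} := by
        ext e
        simp
      rw [hfiber, hfiber]
      exact hβ.colOutDeg_eq hc (Sum.inl_injective hab) j l
  · exact absurd hab Sum.inl_ne_inr
  · exact absurd hab Sum.inr_ne_inl
  · obtain ⟨-, htgt⟩ := Prod.mk.inj (Sum.inr_injective hab)
    have hinl : subdivisionColouring tgt c β (Sum.inl (tgt e)) =
        subdivisionColouring tgt c β (Sum.inl (tgt e')) :=
      subdivisionColouring_eq_iff.mpr (congrArg Sum.inl htgt)
    rw [ncard_auxAdj_inr, ncard_auxAdj_inr, hinl]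

lemma edgeColourStable_of_stableDigraphColouring [Finite E] {β' : V ⊕ E → ℕ}
    (hstab : StableDigraphColouring (auxAdj src tgt) β')
    (hrefine : ∀ a b, β' a = β' b → auxColouring c a = auxColouring c b)
    (hrestrict : ∀ u v : V, β' (Sum.inl u) = β' (Sum.inl v) ↔ β u = β v) :
    EdgeColourStable p src tgt c β := by
  intro u v huv j _ _ i
  refine Set.ncard_inter_eq_of_ncard_inter_fiber_eq (fun e => β' (Sum.inr e))
    (fun e e' hee' ⟨hce, htgt⟩ => ⟨?_, ?_⟩) fun k => ?_
  · exact (hrefine _ _ hee').symm.trans hce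
  · exact ((hrestrict _ _).mp (hstab.eq_inl_tgt_of_eq_inr hee')).symm.trans htgt
  · have hcount := hstab _ _ ((hrestrict u v).mpr huv) k
    rwa [ncard_auxAdj_inl, ncard_auxAdj_inl] at hcount

end EdgeColoured

theorem edge_coloured_reduction_general {V E : Type*} [Finite E]
    (p : ℕ) (src tgt : E → V) (c : E → ℕ) (hc : ∀ e, 1 ≤ c e ∧ c e ≤ p)
    (β : V → ℕ) :
    EdgeColourStable p src tgt c β ↔
      ∃ β' : (V ⊕ E) → ℕ,
        StableDigraphColouring (auxAdj src tgt) β' ∧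
        (∀ a b, β' a = β' b → auxColouring c a = auxColouring c b) ∧
        (∀ u v : V, β' (Sum.inl u) = β' (Sum.inl v) ↔ β u = β v) := by
  refine ⟨fun hβ => ⟨subdivisionColouring tgt c β,
    hβ.stableDigraphColouring_subdivisionColouring hc, fun a b hab => ?_, fun u v => ?_⟩,
    fun ⟨_, hstab, hrefine, hrestrict⟩ =>
      edgeColourStable_of_stableDigraphColouring hstab hrefine hrestrict⟩
  · rw [subdivisionColouring_eq_iff] at hab
    rcases a with u | e <;> rcases b with v | e' <;> simp_all [auxColouring]
  · rw [subdivisionColouring_eq_iff]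
    exact Sum.inl_injective.eq_iff

/-- For a finite `p`-edge-coloured directed multigraph `G = (V,E,c)`
and the associated digraph `G'` on `V ⊕ E` with initial colouring `α`, a vertex
colouring `β` of `V` is edge-colour stable for `G` iff there is a stable colouring `β'`
of `G'` whose partition refines `π_α` and whose restriction to `V` induces the same
partition of `V` as `β`. -/
theorem edge_coloured_reduction {V E : Type*} [Finite V] [Finite E]
    (p : ℕ) (src tgt : E → V) (c : E → ℕ) (hc : ∀ e, 1 ≤ c e ∧ c e ≤ p)
    (β : V → ℕ) :
    EdgeColourStable p src tgt c β ↔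
      ∃ β' : (V ⊕ E) → ℕ,
        StableDigraphColouring (auxAdj src tgt) β' ∧
        (∀ a b, β' a = β' b → auxColouring c a = auxColouring c b) ∧
        (∀ u v : V, β' (Sum.inl u) = β' (Sum.inl v) ↔ β u = β v) :=
  edge_coloured_reduction_general p src tgt c hc β
end
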